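/- arXiv:1208.4125 — 7 statements merged into one kernel-verified Lean document; each statement's English description precedes it below -/
import Mathlib

section
/- For any threshold graph G on n ≥ 3 vertices, τ(G) = ∏_{i=2}^{n-1} |{v ∈ V : deg(v) ≥ i}|, where τ(G) is the number of spanning trees of G. -/
/-!
Let `F_G(t)` be the number of spanning forests of `G` in which every tree carries a root and one
of `t` colours (so `F_G(t) = det (L + t)`). For threshold graphs `F_G(t) = ∏ᵢ₌₁ⁿ (d*ᵢ + t)`, by
induction: a threshold graph has an isolated or a universal vertex `v`, and `G - v` is again a
threshold graph. An isolated `v` is a tree of its own, so `F_G(t) = t F_{G-v}(t)`. If `v` is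
universal, delete it and give its descendants a new colour; since at a fixed vertex every colour
is equally frequent, counting gives `(t + 1) F_G(t) = t (t + n) F_{G-v}(t + 1)`. Rooting the
spanning trees of `G` at a universal vertex `v` and cutting `v` off identifies them with the rooted
forests of `G - v`, so `τ(G) = F_{G-v}(1)`; an isolated vertex forces `τ(G) = 0 = d*ₙ₋₁`.
-/

/-- A graph is a threshold graph if there are vertex weights `φ` and a threshold `α`
such that two distinct vertices are adjacent iff the sum of their weights is at least `α`. -/
def IsThreshold {V : Type*} (G : SimpleGraph V) : Prop :=
  ∃ (φ : V → ℝ) (α : ℝ), ∀ u v : V, u ≠ v → (G.Adj u v ↔ α ≤ φ u + φ v)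

/-- The number of spanning trees of `G`. -/
noncomputable def spanningTreeCount {V : Type*} (G : SimpleGraph V) : ℕ :=
  {H : SimpleGraph V | H ≤ G ∧ H.IsTree}.ncard

open Function Finset

theorem Function.IsPeriodicPt.isFixedPt_of_isFixedPt_iterate {α : Type*} {f : α → α} {x : α}
    {n k : ℕ} (hx : IsPeriodicPt f n x) (hn : 0 < n) (hk : IsFixedPt f (f^[k] x)) :
    IsFixedPt f x := by
  have hle : k ≤ n * k := Nat.le_mul_of_pos_left k hn
  have h : f^[n * k] x = f^[k] x := by
    rw [← Nat.sub_add_cancel hle, iterate_add_apply, (hk.iterate _).eq]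
  rw [(hx.mul_const k).eq] at h
  exact (congrArg (IsFixedPt f) h).mpr hk

theorem Fin.castSucc_lastCases_of_ne_last {t : ℕ} (c : Fin t) {x : Fin (t + 1)}
    (hx : x ≠ Fin.last t) : (Fin.lastCases c id x : Fin t).castSucc = x := by
  induction x using Fin.lastCases with
  | last => exact (hx rfl).elim
  | cast i => simp

theorem Fintype.card_subtype_ne_add_one {α : Type*} [Fintype α] [DecidableEq α] (a : α) :
    Fintype.card {b // b ≠ a} + 1 = Fintype.card α := by
  rw [← Fintype.card_option]
  exact Fintype.card_congr (Equiv.optionSubtypeNe a)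

namespace Function

variable {α : Type*}

def dropNone (p : Option α → Option α) (a : α) : α := (p (some a)).getD a

def attachNone (w : Option α) (q : α → α) (s : α → Prop) [DecidablePred s] :
    Option α → Option α
  | none => w
  | some a => if s a then none else some (q a)

section dropNone

variable {p : Option α → Option α} {a b : α}

theorem eq_none_or_eq_some_dropNone (p : Option α → Option α) (a : α) :
    p (some a) = none ∨ p (some a) = some (dropNone p a) := by
  cases h : p (some a) <;> simp [dropNone, h]

theorem dropNone_of_eq_none (h : p (some a) = none) : dropNone p a = a := by
  simp [dropNone, h]

theorem exists_isFixedPt_dropNone (hp : ∀ x, ∃ k, IsFixedPt p (p^[k] x)) (a : α) :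
    ∃ k, IsFixedPt (dropNone p) ((dropNone p)^[k] a) := by
  obtain ⟨k, hk⟩ := hp (some a)
  induction k generalizing a with
  | zero =>
    rcases eq_none_or_eq_some_dropNone p a with h | h
    · exact ⟨0, dropNone_of_eq_none h⟩
    · exact ⟨0, Option.some_injective _ (h.symm.trans hk)⟩
  | succ k ih =>
    rcases eq_none_or_eq_some_dropNone p a with h | h
    · exact ⟨0, dropNone_of_eq_none h⟩
    · obtain ⟨j, hj⟩ := ih (dropNone p a) (by rwa [iterate_succ_apply, h] at hk)
      exact ⟨j + 1, by rwa [iterate_succ_apply]⟩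

theorem exists_iterate_eq_none_iff_of_eq_some (h : p (some a) = some b) :
    (∃ k, p^[k] (some a) = none) ↔ ∃ k, p^[k] (some b) = none := by
  refine ⟨fun ⟨k, hk⟩ => ?_, fun ⟨k, hk⟩ => ⟨k + 1, by rwa [iterate_succ_apply, h]⟩⟩
  cases k with
  | zero => exact (Option.some_ne_none a hk).elim
  | succ k => exact ⟨k, by rwa [iterate_succ_apply, h] at hk⟩

end dropNone

section attachNone

variable {w : Option α} {q : α → α} {s : α → Prop} [DecidablePred s] {a : α}

@[simp] theorem attachNone_none : attachNone w q s none = w := rfl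

@[simp] theorem attachNone_some :
    attachNone w q s (some a) = if s a then none else some (q a) := rfl

theorem iterate_attachNone_some (h : ∀ k, ¬ s (q^[k] a)) (k : ℕ) :
    (attachNone w q s)^[k] (some a) = some (q^[k] a) := by
  induction k generalizing a with
  | zero => rfl
  | succ k ih =>
    rw [iterate_succ_apply, attachNone_some, if_neg (show ¬ s a from h 0), ih fun j => ?_,
      iterate_succ_apply]
    simpa only [← iterate_succ_apply] using h (j + 1)

theorem exists_iterate_attachNone_eq_none (h : ∃ k, s (q^[k] a)) :
    ∃ k, (attachNone w q s)^[k] (some a) = none := by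
  obtain ⟨k, hk⟩ := h
  induction k generalizing a with
  | zero => exact ⟨1, by simp [show s a from hk]⟩
  | succ k ih =>
    by_cases ha : s a
    · exact ⟨1, by simp [ha]⟩
    · obtain ⟨j, hj⟩ := ih (a := q a) (by rwa [← iterate_succ_apply])
      exact ⟨j + 1, by simpa [ha] using hj⟩

theorem dropNone_attachNone (hs : ∀ a, s a → q a = a) : dropNone (attachNone w q s) = q := by
  funext a
  by_cases ha : s a <;> simp [dropNone, ha, hs]

theorem attachNone_dropNone {p : Option α → Option α} (hw : p none = w)
    (hs : ∀ a, s a ↔ p (some a) = none) : attachNone w (dropNone p) s = p := by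
  funext o
  rcases o with _ | a
  · exact hw.symm
  by_cases ha : s a
  · simp [ha, (hs a).1 ha]
  · rcases eq_none_or_eq_some_dropNone p a with h | h
    · exact (ha ((hs a).2 h)).elim
    · simp [ha, h]

end attachNone

end Function

namespace SimpleGraph

variable {V W : Type*}

theorem reachable_iterate_fromRel (p : V → V) (k : ℕ) (v : V) :
    (fromRel (p · = ·)).Reachable v (p^[k] v) := by
  induction k generalizing v with
  | zero => rfl
  | succ k ih =>
    refine .trans ?_ (ih (p v))
    by_cases hv : p v = v
    · rw [hv]
    · exact ((fromRel_adj _ _ _).2 ⟨Ne.symm hv, Or.inl rfl⟩).reachable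

theorem parent_edge_mem_edges (p : V → V) {x a b : V} (w : (fromRel (p · = ·)).Walk a b)
    (ha : ∃ k, p^[k] a = x) (hb : ∀ k, p^[k] b ≠ x) : s(x, p x) ∈ w.edges := by
  obtain ⟨d, hd, ⟨k, hk⟩, hout⟩ := w.exists_boundary_dart {z | ∃ k, p^[k] z = x} ha
    (fun ⟨k, hk⟩ => hb k hk)
  have hedge : d.edge = s(x, p x) := by
    rcases d.adj.2 with h | h
    · cases k with
      | zero => simp [← hk, ← h, Dart.edge]
      | succ k => exact (hout ⟨k, by rwa [← h, ← iterate_succ_apply]⟩).elim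
    · exact (hout ⟨k + 1, by rwa [iterate_succ_apply, h]⟩).elim
  exact hedge ▸ w.edges_eq_map_darts ▸ List.mem_map_of_mem hd

structure IsParentMap (G : SimpleGraph V) (r : V) (p : V → V) : Prop where
  adj : ∀ v, v ≠ r → G.Adj v (p v)
  map_root : p r = r
  exists_iterate_eq_root : ∀ v, ∃ k, p^[k] v = r

namespace IsParentMap

variable {G H : SimpleGraph V} {r : V} {p : V → V}

theorem mono (h : H.IsParentMap r p) (hle : H ≤ G) : G.IsParentMap r p :=
  ⟨fun v hv => hle (h.adj v hv), h.map_root, h.exists_iterate_eq_root⟩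

theorem eq_or_adj (h : G.IsParentMap r p) (v : V) : p v = v ∨ G.Adj v (p v) := by
  by_cases hv : v = r
  · exact Or.inl (hv ▸ h.map_root)
  · exact Or.inr (h.adj v hv)

theorem exists_isFixedPt (h : G.IsParentMap r p) (v : V) : ∃ k, IsFixedPt p (p^[k] v) := by
  obtain ⟨k, hk⟩ := h.exists_iterate_eq_root v
  exact ⟨k, hk ▸ h.map_root⟩

theorem ne_root_of_apply_ne (h : G.IsParentMap r p) {v : V} (hv : p v ≠ v) : v ≠ r :=
  fun hvr => hv (hvr ▸ h.map_root)

theorem iterate_apply_ne (h : G.IsParentMap r p) {v : V} (hv : v ≠ r) (k : ℕ) :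
    p^[k] (p v) ≠ v := fun hk => by
  obtain ⟨j, hj⟩ := h.exists_iterate_eq_root v
  have hfix : IsFixedPt p v :=
    IsPeriodicPt.isFixedPt_of_isFixedPt_iterate (n := k + 1) hk k.succ_pos (hj ▸ h.map_root)
  exact hv (by rwa [(hfix.iterate j).eq] at hj)

theorem fromRel_adj_apply (h : G.IsParentMap r p) {v : V} (hv : v ≠ r) :
    (fromRel (p · = ·)).Adj v (p v) :=
  (fromRel_adj _ _ _).2 ⟨(h.iterate_apply_ne hv 0).symm, Or.inl rfl⟩

theorem fromRel_le (h : G.IsParentMap r p) : fromRel (p · = ·) ≤ G := by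
  rintro a b ⟨hab, rfl | rfl⟩
  · exact h.adj a (h.ne_root_of_apply_ne hab.symm)
  · exact (h.adj b (h.ne_root_of_apply_ne hab)).symm

theorem isTree_fromRel (h : G.IsParentMap r p) : (fromRel (p · = ·)).IsTree := by
  refine ⟨{ preconnected := fun a b => ?_, nonempty := ⟨r⟩ },
    isAcyclic_iff_forall_adj_isBridge.2 ?_⟩
  · obtain ⟨i, hi⟩ := h.exists_iterate_eq_root a
    obtain ⟨j, hj⟩ := h.exists_iterate_eq_root b
    exact (hi ▸ reachable_iterate_fromRel p i a).trans
      (hj ▸ reachable_iterate_fromRel p j b).symm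
  · have hbridge (x : V) (hx : p x ≠ x) : (fromRel (p · = ·)).IsBridge s(x, p x) :=
      isBridge_iff_forall_walk_mem_edges.2 fun w => parent_edge_mem_edges p w ⟨0, rfl⟩
        (h.iterate_apply_ne (h.ne_root_of_apply_ne hx))
    rintro a b ⟨hab, rfl | rfl⟩
    · exact hbridge a hab.symm
    · exact Sym2.eq_swap ▸ hbridge b hab

end IsParentMap

namespace IsTree

variable {T : SimpleGraph V} (hT : T.IsTree) (r : V)

noncomputable def parent (v : V) : V := (hT.existsUnique_path v r).choose.snd

variable {r}

theorem parent_eq_snd {v : V} {P : T.Walk v r} (hP : P.IsPath) : hT.parent r v = P.snd := by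
  rw [parent, (hT.existsUnique_path v r).unique (hT.existsUnique_path v r).choose_spec.1 hP]

theorem isParentMap_parent (r : V) : T.IsParentMap r (hT.parent r) where
  adj v hv := by
    obtain ⟨P, hP⟩ := (hT.existsUnique_path v r).exists
    rw [hT.parent_eq_snd hP]
    exact P.adj_snd (Walk.not_nil_of_ne hv)
  map_root := by
    rw [hT.parent_eq_snd Walk.IsPath.nil]
    rfl
  exists_iterate_eq_root v := by
    obtain ⟨P, hP⟩ := (hT.existsUnique_path v r).exists
    induction hlen : P.length generalizing v with
    | zero => exact ⟨0, Walk.eq_of_length_eq_zero hlen⟩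
    | succ n ih =>
      have hnil : ¬ P.Nil := by rw [← Walk.length_eq_zero_iff]; omega
      obtain ⟨k, hk⟩ := ih _ P.tail hP.tail (by have := P.length_tail_add_one hnil; omega)
      exact ⟨k + 1, by rwa [iterate_succ_apply, hT.parent_eq_snd hP]⟩

theorem fromRel_parent (r : V) : fromRel (hT.parent r · = ·) = T := by
  refine le_antisymm (hT.isParentMap_parent r).fromRel_le fun a b hab => ⟨hab.ne, ?_⟩
  obtain ⟨P, hP⟩ := (hT.existsUnique_path b r).exists
  by_cases ha : a ∈ P.support
  · exact Or.inr <| (hT.parent_eq_snd hP).trans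
      (hT.isAcyclic.eq_snd_of_adj_start hP hab.symm ha).symm
  · exact Or.inl <| (hT.parent_eq_snd (P := .cons hab P)
      ((Walk.cons_isPath_iff _ _).2 ⟨hP, ha⟩)).trans (by simp)

end IsTree

theorem IsParentMap.parent_eq {G : SimpleGraph V} {r : V} {p : V → V} (h : G.IsParentMap r p)
    (hT : (fromRel (p · = ·)).IsTree) : hT.parent r = p := by
  funext v
  obtain ⟨P, hP⟩ := (hT.existsUnique_path v r).exists
  rw [hT.parent_eq_snd hP]
  by_cases hv : v = r
  · subst hv
    rw [(hT.existsUnique_path v v).unique hP Walk.IsPath.nil, h.map_root]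
    rfl
  have hmem := parent_edge_mem_edges p (x := v) P ⟨0, rfl⟩ fun k hk => hv (by
    rw [← hk, iterate_fixed h.map_root])
  exact (hT.isAcyclic.eq_snd_of_adj_start hP (h.fromRel_adj_apply hv)
    (P.snd_mem_support_of_mem_edges hmem)).symm

theorem _root_.spanningTreeCount_eq_card_isParentMap (G : SimpleGraph V) (r : V) :
    spanningTreeCount G = Nat.card {p // G.IsParentMap r p} := by
  rw [spanningTreeCount, ← Nat.card_coe_set_eq]
  exact Nat.card_congr
    { toFun H := ⟨H.2.2.parent r, (H.2.2.isParentMap_parent r).mono H.2.1⟩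
      invFun p := ⟨fromRel (p.1 · = ·), p.2.fromRel_le, p.2.isTree_fromRel⟩
      left_inv H := Subtype.ext (H.2.2.fromRel_parent r)
      right_inv p := Subtype.ext (p.2.parent_eq p.2.isTree_fromRel) }

theorem Iso.spanningTreeCount_eq {G : SimpleGraph V} {G' : SimpleGraph W} (f : G ≃g G') :
    spanningTreeCount G = spanningTreeCount G' := by
  simp only [spanningTreeCount, ← Nat.card_coe_set_eq]
  refine Nat.card_congr (f.toEquiv.simpleGraph.subtypeEquiv fun H => ?_)
  simp only [Set.mem_ofPred_eq, Equiv.simpleGraph_apply,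
    ← (Iso.comap f.toEquiv.symm H).isTree_iff]
  refine and_congr_left'
    ⟨fun hle a b hab => f.symm.map_adj_iff.1 (hle hab), fun hle a b hab => ?_⟩
  simpa using f.symm.map_adj_iff.2 (hle (v := f a) (w := f b) (by
    simpa only [comap_adj, show ∀ x, f.toEquiv.symm (f x) = x from f.toEquiv.symm_apply_apply]
      using hab))

theorem spanningTreeCount_eq_zero_of_isIsolated [Nontrivial V] {G : SimpleGraph V} {u : V}
    (hu : G.IsIsolated u) : spanningTreeCount G = 0 := by
  have : {H | H ≤ G ∧ H.IsTree} = ∅ := Set.eq_empty_of_forall_notMem fun H ⟨hle, hT⟩ =>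
    (hT.connected.mono hle).preconnected.not_isIsolated u hu
  rw [spanningTreeCount, this, Set.ncard_empty]

theorem IsIsolated.comap_optionSubtypeNe [DecidableEq V] {G : SimpleGraph V} {u : V}
    (hu : G.IsIsolated u) : (G.comap (Equiv.optionSubtypeNe u)).IsIsolated none :=
  fun _ => hu _

theorem IsUniversal.comap_optionSubtypeNe [DecidableEq V] {G : SimpleGraph V} {u : V}
    (hu : G.IsUniversal u) : (G.comap (Equiv.optionSubtypeNe u)).IsUniversal none :=
  fun _ hw => hu ((Equiv.optionSubtypeNe u).injective.ne hw)

section conjDegree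

variable [Fintype V] (G : SimpleGraph V) [DecidableRel G.Adj]

/-- The conjugate degree sequence `d*`. -/
def conjDegree (i : ℕ) : ℕ := #{v | i ≤ G.degree v}

@[simp] theorem conjDegree_zero : G.conjDegree 0 = Fintype.card V := by
  simp [conjDegree]

theorem conjDegree_card : G.conjDegree (Fintype.card V) = 0 :=
  card_eq_zero.2 (filter_eq_empty_iff.2 fun v _ => not_le.2 (G.degree_lt_card_verts v))

theorem conjDegree_card_sub_one_eq_zero [Nontrivial V] {u : V} (hu : G.IsIsolated u) :
    G.conjDegree (Fintype.card V - 1) = 0 :=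
  card_eq_zero.2 <| filter_eq_empty_iff.2 fun v _ hv =>
    hu.not_isUniversal v ((G.degree_eq_card_sub_one v).1
      (le_antisymm (Nat.le_sub_one_of_lt (G.degree_lt_card_verts v)) hv))

theorem Iso.conjDegree_eq {G' : SimpleGraph W} [Fintype W] [DecidableRel G'.Adj] (f : G ≃g G')
    (i : ℕ) : G.conjDegree i = G'.conjDegree i :=
  card_equiv f.toEquiv fun v => by simp

end conjDegree

section Option

variable [Fintype V] {G : SimpleGraph (Option V)} [DecidableRel G.Adj]

theorem card_filter_option (P : Option V → Prop) [DecidablePred P] :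
    #{o | P o} = (if P none then 1 else 0) + #{v | P (some v)} := by
  simp only [card_filter, Fintype.sum_option]

theorem degree_some_of_isIsolated (hu : G.IsIsolated none) (v : V) :
    G.degree (some v) = (G.comap some).degree v := by
  have h : ¬ G.Adj (some v) none := fun h => hu _ h.symm
  simp [← card_neighborFinset_eq_degree, neighborFinset_eq_filter, card_filter_option, h]

theorem degree_some_of_isUniversal (hu : G.IsUniversal none) (v : V) :
    G.degree (some v) = (G.comap some).degree v + 1 := by
  simp [← card_neighborFinset_eq_degree, neighborFinset_eq_filter, card_filter_option,
    (hu (Option.some_ne_none v).symm).symm, add_comm]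

theorem conjDegree_of_isIsolated (hu : G.IsIsolated none) {i : ℕ} (hi : i ≠ 0) :
    G.conjDegree i = (G.comap some).conjDegree i := by
  simp [conjDegree, card_filter_option, hu.degree_eq_zero, degree_some_of_isIsolated hu, hi]

theorem conjDegree_succ_of_isUniversal (hu : G.IsUniversal none) {i : ℕ}
    (hi : i < Fintype.card V) : G.conjDegree (i + 1) = (G.comap some).conjDegree i + 1 := by
  have hdeg : G.degree none = Fintype.card V := by
    simpa using (G.degree_eq_card_sub_one none).2 hu
  simp [conjDegree, card_filter_option, hdeg, degree_some_of_isUniversal hu, hi, add_comm,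
    Nat.lt_one_add_iff]

end Option

/-- A spanning forest of `G` whose trees are rooted and coloured with `t` colours: the roots are
the fixed points of `parent`, and `color` is constant on each tree. -/
@[ext]
structure ColoredRootedForest (G : SimpleGraph V) (t : ℕ) where
  parent : V → V
  parent_eq_or_adj : ∀ v, parent v = v ∨ G.Adj v (parent v)
  exists_isFixedPt : ∀ v, ∃ k, IsFixedPt parent (parent^[k] v)
  color : V → Fin t
  color_parent : ∀ v, color (parent v) = color v

namespace ColoredRootedForest

variable {G : SimpleGraph V} {G' : SimpleGraph W} {t : ℕ}

theorem color_iterate (F : G.ColoredRootedForest t) (k : ℕ) (v : V) :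
    F.color (F.parent^[k] v) = F.color v :=
  congrFun (iterate_invariant (funext F.color_parent) k) v

instance [Finite V] : Finite (G.ColoredRootedForest t) :=
  Finite.of_injective (fun F => (F.parent, F.color)) fun _ _ h =>
    ColoredRootedForest.ext (congrArg Prod.fst h) (congrArg Prod.snd h)

theorem card_of_isEmpty [IsEmpty V] : Nat.card (G.ColoredRootedForest t) = 1 :=
  Nat.card_eq_one_iff_unique.2
    ⟨⟨fun _ _ => ColoredRootedForest.ext (Subsingleton.elim _ _) (Subsingleton.elim _ _)⟩,
      ⟨⟨id, isEmptyElim, isEmptyElim, isEmptyElim, isEmptyElim⟩⟩⟩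

def map (f : G ≃g G') (F : G.ColoredRootedForest t) : G'.ColoredRootedForest t where
  parent := f ∘ F.parent ∘ f.symm
  parent_eq_or_adj w := (F.parent_eq_or_adj (f.symm w)).imp (fun h => by simp [h])
    fun h => by simpa using f.map_adj_iff.2 h
  exists_isFixedPt w := by
    obtain ⟨k, hk⟩ := F.exists_isFixedPt (f.symm w)
    have hsemi : Semiconj f F.parent (f ∘ F.parent ∘ f.symm) := fun v => by simp
    refine ⟨k, ?_⟩
    simpa [(hsemi.iterate_right k).eq] using hk.map hsemi
  color := F.color ∘ f.symm
  color_parent w := by simp [F.color_parent]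

def recolor {s : ℕ} (F : G.ColoredRootedForest t) (σ : Fin t → Fin s) :
    G.ColoredRootedForest s where
  __ := F
  color := σ ∘ F.color
  color_parent v := by simp [F.color_parent]

theorem card_color_eq_mul [Finite V] (a : Fin t) :
    Nat.card {x : G.ColoredRootedForest t × V // x.1.color x.2 = a} * t =
      Nat.card (G.ColoredRootedForest t) * Nat.card V := by
  have e : {x : G.ColoredRootedForest t × V // x.1.color x.2 = a} × Fin t ≃
      G.ColoredRootedForest t × V :=
    { toFun x := (x.1.1.1.recolor (Equiv.swap a x.2), x.1.1.2)
      invFun x := (⟨(x.1.recolor (Equiv.swap a (x.1.color x.2)), x.2), by simp [recolor]⟩,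
        x.1.color x.2)
      left_inv := by
        rintro ⟨⟨⟨F, v⟩, hv : F.color v = a⟩, b⟩
        ext <;> simp [recolor, hv]
      right_inv := by
        rintro ⟨F, v⟩
        ext <;> simp [recolor] }
  simpa using Nat.card_congr e

end ColoredRootedForest

theorem Iso.card_coloredRootedForest {G : SimpleGraph V} {G' : SimpleGraph W} (f : G ≃g G')
    (t : ℕ) : Nat.card (G.ColoredRootedForest t) = Nat.card (G'.ColoredRootedForest t) :=
  Nat.card_congr
    { toFun := .map f
      invFun := .map f.symm
      left_inv F := by ext <;> simp [ColoredRootedForest.map]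
      right_inv F := by ext <;> simp [ColoredRootedForest.map] }

theorem dropNone_eq_or_adj {G : SimpleGraph (Option V)} {p : Option V → Option V}
    (hp : ∀ o, p o = o ∨ G.Adj o (p o)) (a : V) :
    dropNone p a = a ∨ (G.comap some).Adj a (dropNone p a) := by
  rcases eq_none_or_eq_some_dropNone p a with h | h
  · exact Or.inl (dropNone_of_eq_none h)
  · rcases hp (some a) with h' | h'
    · exact Or.inl (Option.some_injective _ (h.symm.trans h'))
    · rw [h] at h'
      exact Or.inr h'

namespace ColoredRootedForest

variable {G : SimpleGraph (Option V)} {t : ℕ}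

def restrict (F : G.ColoredRootedForest t) : (G.comap some).ColoredRootedForest t where
  parent := dropNone F.parent
  parent_eq_or_adj := dropNone_eq_or_adj F.parent_eq_or_adj
  exists_isFixedPt := exists_isFixedPt_dropNone F.exists_isFixedPt
  color := F.color ∘ some
  color_parent a := by
    rcases eq_none_or_eq_some_dropNone F.parent a with h | h
    · simp [dropNone_of_eq_none h]
    · simp [← h, F.color_parent]

def equivProdOfIsIsolated (hu : G.IsIsolated none) :
    G.ColoredRootedForest t ≃ (G.comap some).ColoredRootedForest t × Fin t where
  toFun F := (F.restrict, F.color none)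
  invFun x :=
    { parent := attachNone none x.1.parent fun _ => False
      parent_eq_or_adj
        | none => Or.inl rfl
        | some a => by simpa using x.1.parent_eq_or_adj a
      exists_isFixedPt
        | none => ⟨0, rfl⟩
        | some a => by
          obtain ⟨k, hk⟩ := x.1.exists_isFixedPt a
          refine ⟨k, ?_⟩
          rw [iterate_attachNone_some (fun _ h => h)]
          exact congrArg some hk
      color o := o.elim x.2 x.1.color
      color_parent
        | none => rfl
        | some a => by simp [x.1.color_parent] }
  left_inv F := by
    have hroot : F.parent none = none := (F.parent_eq_or_adj none).resolve_right (hu _)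
    have hsome (a : V) : F.parent (some a) ≠ none := fun h => by
      rcases F.parent_eq_or_adj (some a) with h' | h' <;> rw [h] at h'
      · exact Option.some_ne_none a h'.symm
      · exact hu _ h'.symm
    ext1
    · exact attachNone_dropNone hroot fun a => ⟨False.elim, hsome a⟩
    · funext o
      cases o <;> rfl
  right_inv _ := Prod.ext
    (ColoredRootedForest.ext (dropNone_attachNone (w := none) fun _ => False.elim) rfl) rfl

theorem card_of_isIsolated (hu : G.IsIsolated none) :
    Nat.card (G.ColoredRootedForest t) = Nat.card ((G.comap some).ColoredRootedForest t) * t := by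
  simp [Nat.card_congr (equivProdOfIsIsolated hu)]

open Classical in
/-- Delete the vertex `none`, giving its descendants the new colour `Fin.last t`. -/
noncomputable def eraseNone (F : G.ColoredRootedForest t) :
    (G.comap some).ColoredRootedForest (t + 1) where
  __ := F.restrict
  color a :=
    if ∃ k, F.parent^[k] (some a) = none then Fin.last t else (F.color (some a)).castSucc
  color_parent a := by
    rcases eq_none_or_eq_some_dropNone F.parent a with h | h
    · simp [restrict, dropNone_of_eq_none h]
    · simp only [restrict, ← exists_iterate_eq_none_iff_of_eq_some h]
      simp only [← h, F.color_parent]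

theorem eraseNone_color_of_exists {F : G.ColoredRootedForest t} {a : V}
    (h : ∃ k, F.parent^[k] (some a) = none) : (eraseNone F).color a = Fin.last t := by
  simp [eraseNone, h]

theorem eraseNone_color_of_not_exists {F : G.ColoredRootedForest t} {a : V}
    (h : ¬ ∃ k, F.parent^[k] (some a) = none) :
    (eraseNone F).color a = (F.color (some a)).castSucc := by
  simp [eraseNone, h]

theorem eraseNone_color_of_parent_none_eq_some {F : G.ColoredRootedForest t} {z : V}
    (hz : F.parent none = some z) : (eraseNone F).color z = (F.color none).castSucc := by
  rw [eraseNone_color_of_not_exists, ← hz, F.color_parent]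
  rintro ⟨k, hk⟩
  have hfix : IsFixedPt F.parent none := by
    obtain ⟨j, hj⟩ := F.exists_isFixedPt none
    refine IsPeriodicPt.isFixedPt_of_isFixedPt_iterate (n := k + 1) ?_ k.succ_pos hj
    rwa [IsPeriodicPt, IsFixedPt, iterate_succ_apply, hz]
  exact Option.some_ne_none z (hz.symm.trans hfix)

section attach

variable {H : SimpleGraph V} (F : H.ColoredRootedForest (t + 1))

def IsLastColorRoot (a : V) : Prop := F.parent a = a ∧ F.color a = Fin.last t

noncomputable instance : DecidablePred F.IsLastColorRoot := Classical.decPred _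

variable {F} {w : Option V} {a : V}

theorem iterate_attachNone_of_color_ne_last (ha : F.color a ≠ Fin.last t) (k : ℕ) :
    (attachNone w F.parent F.IsLastColorRoot)^[k] (some a) = some (F.parent^[k] a) :=
  iterate_attachNone_some (fun k hk => ha ((F.color_iterate k a).symm.trans hk.2)) k

theorem exists_iterate_attachNone_eq_none_iff :
    (∃ k, (attachNone w F.parent F.IsLastColorRoot)^[k] (some a) = none) ↔
      F.color a = Fin.last t := by
  refine ⟨fun ⟨k, hk⟩ => ?_, fun ha => exists_iterate_attachNone_eq_none ?_⟩
  · by_contra ha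
    exact Option.some_ne_none _ ((iterate_attachNone_of_color_ne_last ha k).symm.trans hk)
  · obtain ⟨k, hk⟩ := F.exists_isFixedPt a
    exact ⟨k, hk, (F.color_iterate k a).trans ha⟩

theorem exists_isFixedPt_attachNone (hw : ∀ z, w = some z → F.color z ≠ Fin.last t)
    (o : Option V) : ∃ k, IsFixedPt (attachNone w F.parent F.IsLastColorRoot)
      ((attachNone w F.parent F.IsLastColorRoot)^[k] o) := by
  set P := attachNone w F.parent F.IsLastColorRoot
  have hne (a : V) (ha : F.color a ≠ Fin.last t) : ∃ k, IsFixedPt P (P^[k] (some a)) := by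
    obtain ⟨k, hk⟩ := F.exists_isFixedPt a
    refine ⟨k, ?_⟩
    rw [IsFixedPt, ← iterate_succ_apply' P, iterate_attachNone_of_color_ne_last ha,
      iterate_attachNone_of_color_ne_last ha, iterate_succ_apply', hk.eq]
  have hnone : ∃ k, IsFixedPt P (P^[k] none) := by
    cases w with
    | none => exact ⟨0, rfl⟩
    | some z =>
      obtain ⟨k, hk⟩ := hne z (hw z rfl)
      exact ⟨k + 1, hk⟩
  rcases o with _ | a
  · exact hnone
  by_cases ha : F.color a = Fin.last t
  · obtain ⟨j, hj⟩ := exists_iterate_attachNone_eq_none_iff.2 ha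
    obtain ⟨k, hk⟩ := hnone
    exact ⟨k + j, by rwa [iterate_add_apply, hj]⟩
  · exact hne a ha

end attach

variable (hu : G.IsUniversal none)
include hu

/-- The inverse of `eraseNone`: `none` gets parent `w` and colour `c`, and the roots of colour
`Fin.last t` become its children. -/
noncomputable def insertNone (F : (G.comap some).ColoredRootedForest (t + 1)) (w : Option V)
    (c : Fin t) (hw : ∀ z, w = some z → F.color z = c.castSucc) : G.ColoredRootedForest t where
  parent := attachNone w F.parent F.IsLastColorRoot
  parent_eq_or_adj
    | none => by
      cases w with
      | none => exact Or.inl rfl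
      | some z => exact Or.inr (hu (Option.some_ne_none z).symm)
    | some a => by
      by_cases ha : F.IsLastColorRoot a
      · exact Or.inr (by simpa [ha] using (hu (Option.some_ne_none a).symm).symm)
      · simpa [ha] using F.parent_eq_or_adj a
  exists_isFixedPt := exists_isFixedPt_attachNone fun z hz => by
    rw [hw z hz]
    exact Fin.castSucc_ne_last c
  color o := o.elim c fun a => Fin.lastCases c id (F.color a)
  color_parent
    | none => by
      cases w with
      | none => rfl
      | some z => simp [hw z rfl]
    | some a => by
      by_cases ha : F.IsLastColorRoot a
      · simp [ha, ha.2]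
      · simp [ha, F.color_parent]

theorem eraseNone_insertNone (F : (G.comap some).ColoredRootedForest (t + 1)) (w : Option V)
    (c : Fin t) (hw : ∀ z, w = some z → F.color z = c.castSucc) :
    eraseNone (insertNone hu F w c hw) = F := by
  ext1
  · exact dropNone_attachNone (w := w) fun _ h => h.1
  · funext a
    by_cases ha : F.color a = Fin.last t
    · rw [eraseNone_color_of_exists (exists_iterate_attachNone_eq_none_iff.2 ha), ha]
    · rw [eraseNone_color_of_not_exists (mt exists_iterate_attachNone_eq_none_iff.1 ha)]
      exact Fin.castSucc_lastCases_of_ne_last c ha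

theorem insertNone_eraseNone (F : G.ColoredRootedForest t) {w : Option V} {c : Fin t}
    (hw : ∀ z, w = some z → (eraseNone F).color z = c.castSucc) (hpw : F.parent none = w)
    (hc : F.color none = c) : insertNone hu (eraseNone F) w c hw = F := by
  ext1
  · refine attachNone_dropNone hpw fun a => ⟨fun ⟨hfix, hlast⟩ => ?_, fun h =>
      ⟨dropNone_of_eq_none h, eraseNone_color_of_exists ⟨1, h⟩⟩⟩
    rcases eq_none_or_eq_some_dropNone F.parent a with h | h
    · exact h
    have hfix' : IsFixedPt F.parent (some a) := h.trans (congrArg some hfix)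
    refine absurd hlast ?_
    rw [eraseNone_color_of_not_exists]
    · exact Fin.castSucc_ne_last _
    · rintro ⟨k, hk⟩
      exact Option.some_ne_none a ((hfix'.iterate k).eq.symm.trans hk)
  · funext o
    rcases o with _ | a
    · exact hc.symm
    by_cases hd : ∃ k, F.parent^[k] (some a) = none
    · show Fin.lastCases c id ((eraseNone F).color a) = F.color (some a)
      obtain ⟨k, hk⟩ := hd
      rw [eraseNone_color_of_exists ⟨k, hk⟩, Fin.lastCases_last, ← F.color_iterate k, hk, hc]
    · show Fin.lastCases c id ((eraseNone F).color a) = F.color (some a)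
      rw [eraseNone_color_of_not_exists hd, Fin.lastCases_castSucc]
      rfl

noncomputable def equivProdOfParentNoneEqNone :
    {F : G.ColoredRootedForest t // F.parent none = none} ≃
      (G.comap some).ColoredRootedForest (t + 1) × Fin t where
  toFun F := (eraseNone F.1, F.1.color none)
  invFun x := ⟨insertNone hu x.1 none x.2 (by rintro _ ⟨⟩), rfl⟩
  left_inv F := Subtype.ext (insertNone_eraseNone hu F.1 (by rintro _ ⟨⟩) F.2 rfl)
  right_inv x := Prod.ext (eraseNone_insertNone hu x.1 none x.2 (by rintro _ ⟨⟩)) rfl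

noncomputable def equivOfParentNoneNeNone :
    {F : G.ColoredRootedForest t // F.parent none ≠ none} ≃
      {x : (G.comap some).ColoredRootedForest (t + 1) × V // x.1.color x.2 ≠ Fin.last t} where
  toFun F := ⟨(eraseNone F.1, (F.1.parent none).get (Option.ne_none_iff_isSome.1 F.2)), by
    rw [eraseNone_color_of_parent_none_eq_some (Option.some_get _).symm]
    exact Fin.castSucc_ne_last _⟩
  invFun x := ⟨insertNone hu x.1.1 (some x.1.2) ((x.1.1.color x.1.2).castPred x.2)
    (by rintro _ ⟨⟩; simp), Option.some_ne_none _⟩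
  left_inv F := Subtype.ext <| insertNone_eraseNone hu F.1 (by rintro _ ⟨⟩; simp)
    (Option.some_get _).symm ((Fin.castPred_eq_iff_eq_castSucc _ _ _).2
      (eraseNone_color_of_parent_none_eq_some (Option.some_get _).symm)).symm
  right_inv x := Subtype.ext <| Prod.ext
    (eraseNone_insertNone hu x.1.1 (some x.1.2) _ (by rintro _ ⟨⟩; simp)) rfl

/- If `none` is a root, `F` is recorded by `eraseNone F` and the colour of `none`. Otherwise it is
recorded by `eraseNone F` and the parent `z` of `none`, which is not of the new colour; by
`card_color_eq_mul` such pairs are a fraction `t / (t + 1)` of all pairs. -/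
theorem card_mul_of_isUniversal [Fintype V] :
    Nat.card (G.ColoredRootedForest t) * (t + 1) =
      t * (t + Fintype.card V + 1) * Nat.card ((G.comap some).ColoredRootedForest (t + 1)) := by
  have hsplit := Nat.card_congr (Equiv.sumCompl fun F : G.ColoredRootedForest t =>
    F.parent none = none)
  rw [Nat.card_sum, Nat.card_congr (equivProdOfParentNoneEqNone hu),
    Nat.card_congr (equivOfParentNoneNeNone hu), Nat.card_prod] at hsplit
  have hcompl := Nat.card_congr (Equiv.sumCompl fun x :
    (G.comap some).ColoredRootedForest (t + 1) × V => x.1.color x.2 = Fin.last t)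
  rw [Nat.card_sum, Nat.card_prod] at hcompl
  have hfiber := card_color_eq_mul (G := G.comap some) (Fin.last t)
  simp only [Nat.card_eq_fintype_card, Fintype.card_fin] at hsplit hcompl hfiber ⊢
  nlinarith

end ColoredRootedForest

section Option

variable {G : SimpleGraph (Option V)}

noncomputable def isParentMapEquivOfIsUniversal (hu : G.IsUniversal none) :
    {p // G.IsParentMap none p} ≃ (G.comap some).ColoredRootedForest 1 where
  toFun p :=
    { parent := dropNone p.1
      parent_eq_or_adj := dropNone_eq_or_adj p.2.eq_or_adj
      exists_isFixedPt := exists_isFixedPt_dropNone p.2.exists_isFixedPt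
      color := 0
      color_parent _ := rfl }
  invFun F := ⟨attachNone none F.parent F.IsLastColorRoot,
    { adj := by
        rintro (_ | a) ha
        · exact (ha rfl).elim
        by_cases hr : F.IsLastColorRoot a
        · simpa [hr] using (hu (Option.some_ne_none a).symm).symm
        · have hne : F.parent a ≠ a := fun h => hr ⟨h, Subsingleton.elim (α := Fin 1) _ _⟩
          simpa [hr] using (F.parent_eq_or_adj a).resolve_left hne
      map_root := rfl
      exists_iterate_eq_root := by
        rintro (_ | a)
        · exact ⟨0, rfl⟩
        · exact ColoredRootedForest.exists_iterate_attachNone_eq_none_iff.2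
            (Subsingleton.elim (α := Fin 1) _ _) }⟩
  left_inv p := Subtype.ext <| attachNone_dropNone p.2.map_root fun a =>
    ⟨fun ⟨h, _⟩ => (eq_none_or_eq_some_dropNone p.1 a).resolve_right fun h' =>
      p.2.iterate_apply_ne (Option.some_ne_none a) 0 (h'.trans (congrArg some h)),
    fun h => ⟨dropNone_of_eq_none h, Subsingleton.elim (α := Fin 1) _ _⟩⟩
  right_inv F := ColoredRootedForest.ext (dropNone_attachNone (w := none) fun _ h => h.1)
    (funext fun _ => Subsingleton.elim (α := Fin 1) _ _)

theorem spanningTreeCount_eq_card_of_isUniversal (hu : G.IsUniversal none) :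
    spanningTreeCount G = Nat.card ((G.comap some).ColoredRootedForest 1) :=
  (spanningTreeCount_eq_card_isParentMap G none).trans
    (Nat.card_congr (isParentMapEquivOfIsUniversal hu))

end Option

end SimpleGraph

theorem IsThreshold.comap {V W : Type*} {G : SimpleGraph W} (hG : IsThreshold G) {f : V → W}
    (hf : Injective f) : IsThreshold (G.comap f) :=
  let ⟨φ, α, h⟩ := hG
  ⟨φ ∘ f, α, fun _ _ huv => h _ _ (hf.ne huv)⟩

theorem IsThreshold.exists_isIsolated_or_isUniversal {V : Type*} [Finite V] [Nonempty V]
    {G : SimpleGraph V} (hG : IsThreshold G) : ∃ u, G.IsIsolated u ∨ G.IsUniversal u := by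
  obtain ⟨φ, α, h⟩ := hG
  obtain ⟨u, hu⟩ := Finite.exists_max φ
  by_cases huniv : G.IsUniversal u
  · exact ⟨u, .inr huniv⟩
  obtain ⟨x, hux, hnadj⟩ : ∃ x, u ≠ x ∧ ¬ G.Adj u x := by
    simpa [SimpleGraph.IsUniversal] using huniv
  refine ⟨x, .inl fun y hxy => hnadj ((h u x hux).2 ?_)⟩
  linarith [(h x y hxy.ne).1 hxy, hu y]

namespace SimpleGraph

variable {V : Type*} [Fintype V]

section Option

variable {G : SimpleGraph (Option V)} [DecidableRel G.Adj]

theorem prod_conjDegree_of_isIsolated (hu : G.IsIsolated none) (t : ℕ) :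
    ∏ i ∈ range (Fintype.card V + 1), (G.conjDegree (i + 1) + t) =
      (∏ i ∈ range (Fintype.card V), ((G.comap some).conjDegree (i + 1) + t)) * t := by
  have htop : G.conjDegree (Fintype.card V + 1) = 0 := by
    simpa using G.conjDegree_card
  rw [prod_range_succ, htop, zero_add]
  congr 1
  exact prod_congr rfl fun i _ => by rw [conjDegree_of_isIsolated hu i.succ_ne_zero]

theorem prod_conjDegree_of_isUniversal (hu : G.IsUniversal none) (t : ℕ) :
    (t + 1) * ∏ i ∈ range (Fintype.card V + 1), (G.conjDegree (i + 1) + t) =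
      t * (t + Fintype.card V + 1) *
        ∏ i ∈ range (Fintype.card V), ((G.comap some).conjDegree (i + 1) + (t + 1)) := by
  have htop : G.conjDegree (Fintype.card V + 1) = 0 := by
    simpa using G.conjDegree_card
  have htop' := (G.comap some).conjDegree_card
  rcases hV : Fintype.card V with _ | k
  · simp only [hV, zero_add] at htop
    simp [htop, mul_comm]
  rw [hV] at htop htop'
  have hmid : ∀ i ∈ range k,
      G.conjDegree (i + 1 + 1) + t = (G.comap some).conjDegree (i + 1) + (t + 1) := fun i hi => by
    rw [conjDegree_succ_of_isUniversal hu (by simp at hi; omega)]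
    omega
  rw [prod_range_succ', prod_range_succ, prod_range_succ, prod_congr rfl hmid, htop, htop',
    conjDegree_succ_of_isUniversal hu (by omega), conjDegree_zero, hV]
  ring

theorem prod_Icc_conjDegree_of_isUniversal (hu : G.IsUniversal none) :
    ∏ i ∈ Icc 2 (Fintype.card V), G.conjDegree i =
      ∏ i ∈ range (Fintype.card V), ((G.comap some).conjDegree (i + 1) + 1) := by
  have htop' := (G.comap some).conjDegree_card
  rcases hV : Fintype.card V with _ | k
  · simp
  rw [hV] at htop'
  rw [prod_range_succ, htop', zero_add, mul_one, ← Ico_add_one_right_eq_Icc,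
    prod_Ico_eq_prod_range]
  refine prod_congr (by simp) fun i hi => ?_
  rw [add_comm 2 i, conjDegree_succ_of_isUniversal hu (by simp at hi; omega)]

theorem card_coloredRootedForest_eq_prod_of_comap_some
    (hnone : G.IsIsolated none ∨ G.IsUniversal none)
    (ih : ∀ t, Nat.card ((G.comap some).ColoredRootedForest t) =
      ∏ i ∈ range (Fintype.card V), ((G.comap some).conjDegree (i + 1) + t)) (t : ℕ) :
    Nat.card (G.ColoredRootedForest t) =
      ∏ i ∈ range (Fintype.card V + 1), (G.conjDegree (i + 1) + t) := by
  rcases hnone with hu | hu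
  · rw [ColoredRootedForest.card_of_isIsolated hu, ih, prod_conjDegree_of_isIsolated hu]
  · refine Nat.eq_of_mul_eq_mul_left t.succ_pos ?_
    rw [prod_conjDegree_of_isUniversal hu, mul_comm,
      ColoredRootedForest.card_mul_of_isUniversal hu, ih]

end Option

variable {G : SimpleGraph V} [DecidableRel G.Adj]

theorem card_coloredRootedForest_eq_prod (hG : IsThreshold G) (t : ℕ) :
    Nat.card (G.ColoredRootedForest t) =
      ∏ i ∈ range (Fintype.card V), (G.conjDegree (i + 1) + t) := by
  induction hn : Fintype.card V generalizing V t with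
  | zero =>
    have : IsEmpty V := Fintype.card_eq_zero_iff.1 hn
    exact ColoredRootedForest.card_of_isEmpty
  | succ n ih =>
    classical
    have : Nonempty V := Fintype.card_pos_iff.1 (hn ▸ n.succ_pos)
    obtain ⟨u, hu⟩ := hG.exists_isIsolated_or_isUniversal
    let f := Iso.comap (Equiv.optionSubtypeNe u) G
    have hW : Fintype.card {v // v ≠ u} = n := by
      have := Fintype.card_subtype_ne_add_one u
      omega
    rw [← f.card_coloredRootedForest, ← hW]
    simp_rw [← f.conjDegree_eq]
    refine card_coloredRootedForest_eq_prod_of_comap_some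
      (hu.imp IsIsolated.comap_optionSubtypeNe IsUniversal.comap_optionSubtypeNe) (fun t => ?_) t
    rw [hW]
    exact ih ((hG.comap (Equiv.injective _)).comap (Option.some_injective _)) t hW

theorem _root_.spanningTreeCount_eq_prod_conjDegree (hG : IsThreshold G)
    (hV : 3 ≤ Fintype.card V) :
    spanningTreeCount G = ∏ i ∈ Icc 2 (Fintype.card V - 1), G.conjDegree i := by
  classical
  have : Nontrivial V := Fintype.one_lt_card_iff_nontrivial.1 (by omega)
  obtain ⟨u, hu | hu⟩ := hG.exists_isIsolated_or_isUniversal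
  · rw [spanningTreeCount_eq_zero_of_isIsolated hu, eq_comm]
    exact prod_eq_zero (by simp; omega) (G.conjDegree_card_sub_one_eq_zero hu)
  · let f := Iso.comap (Equiv.optionSubtypeNe u) G
    have hW : Fintype.card V - 1 = Fintype.card {v // v ≠ u} := by
      have := Fintype.card_subtype_ne_add_one u
      omega
    rw [← f.spanningTreeCount_eq,
      spanningTreeCount_eq_card_of_isUniversal hu.comap_optionSubtypeNe,
      card_coloredRootedForest_eq_prod
        ((hG.comap (Equiv.injective _)).comap (Option.some_injective _)),
      ← prod_Icc_conjDegree_of_isUniversal hu.comap_optionSubtypeNe, hW]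
    simp_rw [f.conjDegree_eq]

end SimpleGraph

/-- For any threshold graph `G` on `n ≥ 3` vertices,
`τ(G) = ∏_{i=2}^{n-1} |{v ∈ V : deg(v) ≥ i}|`. -/
theorem threshold_spanning_tree_count' (n : ℕ) (hn : 3 ≤ n)
    (G : SimpleGraph (Fin n)) [DecidableRel G.Adj] (hG : IsThreshold G) :
    spanningTreeCount G =
      ∏ i ∈ Finset.Icc 2 (n - 1),
        (Finset.univ.filter fun v : Fin n => i ≤ G.degree v).card := by
  have h := spanningTreeCount_eq_prod_conjDegree hG (by simpa using hn)
  rwa [Fintype.card_fin] at h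
end

section
/- (Cayley's formula) For any positive integer n, the number of spanning trees of the complete graph K_n on n vertices equals n^{n-2}. -/
namespace Cayley
open Function Set SimpleGraph

variable {α β : Type*}

lemma _root_.Equiv.conj_iterate (e : α ≃ β) (f : α → α) (k : ℕ) (x : α) :
    (e.conj f)^[k] (e x) = e (f^[k] x) :=
  (Semiconj.iterate_right (fun x => by simp [Equiv.conj_apply]) k x).symm

lemma exists_iterate_mem_periodicPts [Finite α] (f : α → α) (v : α) :
    ∃ i < Nat.card α, f^[i] v ∈ periodicPts f := by
  have hninj : ¬ Injective (fun i : Fin (Nat.card α + 1) => f^[i] v) := fun hinj => by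
    simpa using Nat.card_le_card_of_injective _ hinj
  obtain ⟨i, j, hij, hne⟩ := Function.not_injective_iff.mp hninj
  wlog hlt : i < j generalizing i j
  · exact this j i hij.symm (Ne.symm hne) (lt_of_le_of_ne (not_lt.mp hlt) (Ne.symm hne))
  refine ⟨i, by omega, j - i, Nat.sub_pos_of_lt hlt, ?_⟩
  change f^[j - i] (f^[i] v) = f^[i] v
  rw [← iterate_add_apply, Nat.sub_add_cancel (Fin.le_def.mp hlt.le)]
  exact hij.symm

def IsRootedAt (f : α → α) (r : α) : Prop := f r = r ∧ ∀ v, ∃ k, f^[k] v = r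

lemma IsRootedAt.eq_of_isPeriodicPt {f : α → α} {r x : α} (hf : IsRootedAt f r) {c : ℕ}
    (hc : 0 < c) (hx : IsPeriodicPt f c x) : x = r := by
  obtain ⟨k, hk⟩ := hf.2 x
  calc x = f^[c * k] x := ((hx.mul_const k).eq).symm
    _ = f^[c * k - k] (f^[k] x) := by
      rw [← iterate_add_apply, Nat.sub_add_cancel (Nat.le_mul_of_pos_left k hc)]
    _ = r := by rw [hk]; exact iterate_fixed hf.1 _

lemma IsRootedAt.unique {f : α → α} {r r' : α} (h : IsRootedAt f r) (h' : IsRootedAt f r') :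
    r = r' :=
  h'.eq_of_isPeriodicPt one_pos h.1

lemma IsRootedAt.iterate_eq_of_card_le [Finite α] {f : α → α} {r : α} (hf : IsRootedAt f r)
    {n : ℕ} (hn : Nat.card α ≤ n + 1) (v : α) : f^[n] v = r := by
  obtain ⟨i, hi, c, hc, hper⟩ := exists_iterate_mem_periodicPts f v
  rw [← Nat.sub_add_cancel (show i ≤ n by omega), iterate_add_apply,
    hf.eq_of_isPeriodicPt hc hper, iterate_fixed hf.1]

lemma IsRootedAt.conj {f : α → α} {r : α} (hf : IsRootedAt f r) (e : α ≃ β) :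
    IsRootedAt (e.conj f) (e r) := by
  refine ⟨by simp [Equiv.conj_apply, hf.1], fun v => ?_⟩
  obtain ⟨k, hk⟩ := hf.2 (e.symm v)
  exact ⟨k, by rw [← e.apply_symm_apply v, Equiv.conj_iterate, hk]⟩

section Graph

variable {V : Type*}

def graphOf (f : V → V) : SimpleGraph V := fromRel fun v w => f v = w

lemma graphOf_le {G : SimpleGraph V} {f : V → V} {r : V} (hr : f r = r)
    (hadj : ∀ v ≠ r, G.Adj v (f v)) : graphOf f ≤ G := by
  have key : ∀ v, v ≠ f v → G.Adj v (f v) := fun v hv =>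
    hadj v fun h => hv (by rw [h, hr])
  rintro v w ⟨hvw, rfl | rfl⟩
  · exact key v hvw
  · exact (key w hvw.symm).symm

lemma reachable_iterate (f : V → V) (v : V) (k : ℕ) : (graphOf f).Reachable v (f^[k] v) := by
  induction k with
  | zero => rfl
  | succ k ih =>
    refine ih.trans ?_
    rw [iterate_succ_apply']
    by_cases h : f^[k] v = f (f^[k] v)
    · rw [← h]
    · exact Adj.reachable ⟨h, Or.inl rfl⟩

lemma IsRootedAt.connected_graphOf {f : V → V} {r : V} (hf : IsRootedAt f r) :
    (graphOf f).Connected := by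
  have : Nonempty V := ⟨r⟩
  refine ⟨fun u v => ?_⟩
  obtain ⟨k, hk⟩ := hf.2 u
  obtain ⟨l, hl⟩ := hf.2 v
  exact (hk ▸ reachable_iterate f u k).trans (hl ▸ reachable_iterate f v l).symm

-- A vertex `v` with `f v ≠ g v` forces `f (g v) = v ≠ g (g v)`, so `g v` is another one;
-- but the `g`-orbit of `v` reaches `r`, where `f` and `g` agree.
lemma IsRootedAt.eq_of_graphOf_le {f g : V → V} {r : V} (hf : IsRootedAt f r)
    (hg : IsRootedAt g r) (hle : graphOf g ≤ graphOf f) : f = g := by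
  funext v
  obtain ⟨k, hk⟩ := hg.2 v
  induction k generalizing v with
  | zero => subst hk; exact hf.1.trans hg.1.symm
  | succ k ih =>
    by_contra hne
    have hvr : v ≠ r := by rintro rfl; exact hne (hf.1.trans hg.1.symm)
    have hgv : g v ≠ v := fun h => hvr (hg.eq_of_isPeriodicPt one_pos h)
    have hfgv : f (g v) = v := by
      obtain ⟨-, h | h⟩ := hle (show (graphOf g).Adj v (g v) from ⟨hgv.symm, Or.inl rfl⟩)
      · exact absurd h hne
      · exact h
    have hggv : g (g v) ≠ v := fun h => hvr (hg.eq_of_isPeriodicPt two_pos h)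
    exact hggv ((ih (g v) (by rwa [← iterate_succ_apply])).symm.trans hfgv)

lemma _root_.SimpleGraph.Connected.exists_isRootedAt_adj {G : SimpleGraph V} (hG : G.Connected)
    (r : V) :
    ∃ f : V → V, IsRootedAt f r ∧ ∀ v ≠ r, G.Adj v (f v) := by
  classical
  have hcloser : ∀ v ≠ r, ∃ w, G.Adj v w ∧ G.dist w r < G.dist v r := by
    intro v hv
    obtain ⟨p, hp⟩ := hG.exists_walk_length_eq_dist v r
    cases p with
    | nil => exact absurd rfl hv
    | cons h q => exact ⟨_, h, by have := dist_le q; simp only [Walk.length_cons] at hp; omega⟩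
  choose! g hgadj hgdist using hcloser
  refine ⟨fun v => if v = r then r else g v, ⟨by simp, fun v => ?_⟩,
    fun v hv => by simpa [hv] using hgadj v hv⟩
  induction hd : G.dist v r using Nat.strong_induction_on generalizing v with
  | _ d ih =>
    by_cases hv : v = r
    · exact ⟨0, hv⟩
    · obtain ⟨k, hk⟩ := ih _ (hd ▸ hgdist v hv) (g v) rfl
      exact ⟨k + 1, by rwa [iterate_succ_apply, if_neg hv]⟩

-- A spanning tree `T` of `graphOf f` has a parent map `g` towards `r` of its own, and
-- `graphOf g ≤ T ≤ graphOf f` forces `g = f`.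
lemma IsRootedAt.isTree_graphOf {f : V → V} {r : V} (hf : IsRootedAt f r) :
    (graphOf f).IsTree := by
  obtain ⟨T, hTf, hT⟩ := hf.connected_graphOf.exists_isTree_le
  obtain ⟨g, hg, hgT⟩ := hT.connected.exists_isRootedAt_adj r
  have hgT : graphOf g ≤ T := graphOf_le hg.1 hgT
  obtain rfl := hf.eq_of_graphOf_le hg (hgT.trans hTf)
  rwa [le_antisymm hgT hTf]

noncomputable def rootedMapEquivTree (r : V) :
    {f : V → V // IsRootedAt f r} ≃ {T : SimpleGraph V // T.IsTree} :=
  Equiv.ofBijective (fun f => ⟨graphOf f, f.2.isTree_graphOf⟩) <| by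
    refine ⟨fun f g h => Subtype.ext (f.2.eq_of_graphOf_le g.2 ?_), fun T => ?_⟩
    · exact (congrArg Subtype.val h).ge
    · obtain ⟨g, hg, hgT⟩ := T.2.connected.exists_isRootedAt_adj r
      exact ⟨⟨g, hg⟩, Subtype.ext <| (isTree_iff_minimal_connected.mp T.2).eq_of_le
        hg.connected_graphOf (graphOf_le hg.1 hgT)⟩

end Graph

lemma conj_swap_conj_swap [DecidableEq α] (a b : α) (f : α → α) :
    (Equiv.swap a b).conj ((Equiv.swap a b).conj f) = f := by
  funext v; simp [Equiv.conj_apply]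

noncomputable def rerootEquiv [DecidableEq α] (a : α) :
    {f : α → α // ∃ r, IsRootedAt f r} ≃ α × {f : α → α // IsRootedAt f a} where
  toFun f := (f.2.choose, ⟨(Equiv.swap f.2.choose a).conj f, by
    simpa using f.2.choose_spec.conj (Equiv.swap f.2.choose a)⟩)
  invFun p := ⟨(Equiv.swap p.1 a).conj p.2, p.1, by simpa using p.2.2.conj (Equiv.swap p.1 a)⟩
  left_inv f := Subtype.ext (conj_swap_conj_swap _ _ _)
  right_inv := by
    rintro ⟨r, g, hg⟩
    have hroot : IsRootedAt ((Equiv.swap r a).conj g) r := by simpa using hg.conj (Equiv.swap r a)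
    have hr : (⟨r, hroot⟩ : ∃ r, IsRootedAt _ r).choose = r :=
      (Exists.choose_spec ⟨r, hroot⟩).unique hroot
    ext1
    · exact hr
    · exact Subtype.ext (by simp only [hr]; exact conj_swap_conj_swap _ _ _)

def IsAbsorbing (h : α → α) (S : Set α) : Prop := MapsTo h S S ∧ ∀ v, ∃ k, h^[k] v ∈ S

def rootedForests (S : Set α) : Set (α → α) :=
  {g | EqOn g id S ∧ ∀ v, ∃ k, g^[k] v ∈ S}

lemma rootedForests_empty [Nonempty α] : rootedForests (∅ : Set α) = ∅ :=
  eq_empty_of_forall_notMem fun _ hg => by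
    obtain ⟨_, h⟩ := hg.2 (Classical.arbitrary α)
    exact h

lemma exists_iterate_mem_of_eqOn_compl {f g : α → α} {S : Set α} (hfg : EqOn f g Sᶜ) {v : α}
    {k : ℕ} (hk : f^[k] v ∈ S) : ∃ k, g^[k] v ∈ S := by
  induction k generalizing v with
  | zero => exact ⟨0, hk⟩
  | succ k ih =>
    by_cases hv : v ∈ S
    · exact ⟨0, hv⟩
    · obtain ⟨j, hj⟩ := ih (v := f v) hk
      exact ⟨j + 1, by rwa [iterate_succ_apply, ← hfg hv]⟩

section Glue

variable {S : Set α} [DecidablePred (· ∈ S)]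

def glue (c : S → S) (g : α → α) : α → α :=
  fun x => if hx : x ∈ S then c ⟨x, hx⟩ else g x

variable (S) in
def forestPart (h : α → α) : α → α := S.piecewise id h

lemma mapsTo_glue (c : S → S) (g : α → α) : MapsTo (glue c g) S S := fun x hx => by
  simp only [glue, dif_pos hx, Subtype.coe_prop]

lemma restrict_glue (c : S → S) (g : α → α) : (mapsTo_glue c g).restrict = c :=
  funext fun x => Subtype.ext (dif_pos x.2)

lemma isAbsorbing_glue (c : S → S) {g : α → α} (hg : g ∈ rootedForests S) :
    IsAbsorbing (glue c g) S := by
  refine ⟨mapsTo_glue c g, fun v => ?_⟩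
  obtain ⟨k, hk⟩ := hg.2 v
  exact exists_iterate_mem_of_eqOn_compl (g := glue c g)
    (fun x hx => by simp [glue, show x ∉ S from hx]) hk

lemma forestPart_glue (c : S → S) {g : α → α} (hg : EqOn g id S) :
    forestPart S (glue c g) = g :=
  funext fun x => by
    by_cases hx : x ∈ S
    · simp [forestPart, hx, hg hx]
    · simp [forestPart, glue, hx]

lemma glue_restrict {h : α → α} (hS : MapsTo h S S) : glue hS.restrict (forestPart S h) = h :=
  funext fun x => by
    by_cases hx : x ∈ S
    · simp [glue, hx]
    · simp [glue, forestPart, hx]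

lemma IsAbsorbing.forestPart_mem {h : α → α} (hS : IsAbsorbing h S) :
    forestPart S h ∈ rootedForests S := by
  refine ⟨fun x hx => by simp [forestPart, hx], fun v => ?_⟩
  obtain ⟨k, hk⟩ := hS.2 v
  exact exists_iterate_mem_of_eqOn_compl (fun x hx => (piecewise_eq_of_notMem _ _ _ hx).symm) hk

lemma glue_iterate (c : S → S) (g : α → α) (x : S) (k : ℕ) :
    (glue c g)^[k] x = c^[k] x := by
  rw [← (mapsTo_glue c g).coe_iterate_restrict, restrict_glue]

end Glue

lemma isAbsorbing_periodicPts [Finite α] (h : α → α) : IsAbsorbing h (periodicPts h) :=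
  ⟨(bijOn_periodicPts h).mapsTo, fun v =>
    (exists_iterate_mem_periodicPts h v).imp fun _ hi => hi.2⟩

lemma periodicPts_eq_iff [Finite α] {h : α → α} {S : Set α} :
    periodicPts h = S ↔ IsAbsorbing h S ∧ InjOn h S := by
  refine ⟨by rintro rfl; exact ⟨isAbsorbing_periodicPts h, (bijOn_periodicPts h).injOn⟩,
    fun ⟨hS, hinj⟩ => Set.ext fun x => ⟨?_, fun hx => ?_⟩⟩
  · rintro ⟨c, hc, hx⟩
    obtain ⟨k, hk⟩ := hS.2 x
    rw [← (hx.mul_const k).eq, ← Nat.sub_add_cancel (Nat.le_mul_of_pos_left k hc),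
      iterate_add_apply]
    exact hS.1.iterate _ hk
  · have hper : (⟨x, hx⟩ : S) ∈ periodicPts hS.1.restrict :=
      (hS.1.restrict_inj.mpr hinj).mem_periodicPts _
    exact (show Semiconj Subtype.val hS.1.restrict h from fun _ => rfl).mapsTo_periodicPts hper

noncomputable def periodicPtsFiberEquiv [Finite α] (S : Set α) [DecidablePred (· ∈ S)] :
    {h : α → α // periodicPts h = S} ≃ (S ≃ S) × rootedForests S where
  toFun h :=
    have hS := periodicPts_eq_iff.mp h.2
    (Equiv.ofBijective _ (Finite.injective_iff_bijective.mp (hS.1.1.restrict_inj.mpr hS.2)),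
      ⟨forestPart S h, hS.1.forestPart_mem⟩)
  invFun p := ⟨glue p.1 p.2, periodicPts_eq_iff.mpr ⟨isAbsorbing_glue p.1 p.2.2,
    (mapsTo_glue _ _).restrict_inj.mp (by rw [restrict_glue]; exact p.1.injective)⟩⟩
  left_inv h := Subtype.ext (glue_restrict (periodicPts_eq_iff.mp h.2).1.1)
  right_inv p := Prod.ext (Equiv.ext fun x => congrFun (restrict_glue _ _) x)
    (Subtype.ext (forestPart_glue _ p.2.2.1))

-- `(c, b) ∈ spines β`: `c` is the parent map of a path through all of `β` starting at `b`.
def spines (β : Type*) : Set ((β → β) × β) :=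
  {p | (∃ r, IsRootedAt p.1 r) ∧ ∀ x, ∃ j, p.1^[j] p.2 = x}

-- the parent map of the path `0 → 1 → ⋯ → n`
def pathSucc (n : ℕ) (i : Fin (n + 1)) : Fin (n + 1) := ⟨min (i + 1) n, by omega⟩

lemma pathSucc_iterate (n k : ℕ) (i : Fin (n + 1)) :
    (pathSucc n)^[k] i = ⟨min (i + k) n, by omega⟩ := by
  induction k with
  | zero => ext; simp only [iterate_zero, id_eq, add_zero]; omega
  | succ k ih => rw [iterate_succ_apply', ih]; ext; simp only [pathSucc]; omega

lemma pathSucc_iterate_zero (n : ℕ) (i : Fin (n + 1)) : (pathSucc n)^[i] 0 = i := by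
  rw [pathSucc_iterate]; ext; simp only [Fin.val_zero, zero_add]; omega

lemma conj_pathSucc_mem_spines {n : ℕ} (e : Fin (n + 1) ≃ β) :
    (e.conj (pathSucc n), e 0) ∈ spines β := by
  have hlast : ∀ i, (pathSucc n)^[n] i = Fin.last n := fun i => by
    rw [pathSucc_iterate]; ext; simp only [Fin.val_last]; omega
  refine ⟨⟨e (Fin.last n), ?_, fun v => ⟨n, ?_⟩⟩, fun x => ⟨e.symm x, ?_⟩⟩
  · have : pathSucc n (Fin.last n) = Fin.last n := by ext; simp [pathSucc]
    simp [Equiv.conj_apply, this]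
  · rw [← e.apply_symm_apply v, Equiv.conj_iterate, hlast]
  · rw [Equiv.conj_iterate, pathSucc_iterate_zero, e.apply_symm_apply]

lemma exists_conj_pathSucc_eq [Finite β] {n : ℕ} (hn : Nat.card β = n + 1) {c : β → β}
    {b : β} (hc : (c, b) ∈ spines β) :
    ∃ e : Fin (n + 1) ≃ β, (e.conj (pathSucc n), e 0) = (c, b) := by
  obtain ⟨⟨r, hr⟩, hb⟩ := hc
  have hstop : ∀ j, c^[j] b = c^[min j n] b := fun j => by
    rcases le_total j n with h | h
    · rw [min_eq_left h]
    · rw [min_eq_right h, ← Nat.sub_add_cancel h, iterate_add_apply,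
        hr.iterate_eq_of_card_le hn.le, iterate_fixed hr.1]
  have hsurj : Surjective (fun i : Fin (n + 1) => c^[i] b) := fun x => by
    obtain ⟨j, rfl⟩ := hb x
    exact ⟨⟨min j n, by omega⟩, (hstop j).symm⟩
  let e := Equiv.ofBijective _ (hsurj.bijective_of_nat_card_le (by simp [hn]))
  refine ⟨e, Prod.ext (funext fun x => ?_) rfl⟩
  obtain ⟨i, rfl⟩ := e.surjective x
  change e (pathSucc n (e.symm (e i))) = c (c^[i] b)
  rw [e.symm_apply_apply, ← iterate_succ_apply' c, hstop (i + 1)]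
  rfl

noncomputable def spinesEquiv [Finite β] {n : ℕ} (hn : Nat.card β = n + 1) :
    (Fin (n + 1) ≃ β) ≃ spines β :=
  Equiv.ofBijective (fun e => ⟨_, conj_pathSucc_mem_spines e⟩) <| by
    refine ⟨fun e e' h => Equiv.ext fun i => ?_, fun p => ?_⟩
    · obtain ⟨hc, hb⟩ := Prod.ext_iff.mp (congrArg Subtype.val h)
      rw [← pathSucc_iterate_zero n i, ← Equiv.conj_iterate, ← Equiv.conj_iterate]
      simp only at hc hb
      rw [hc, hb]
    · obtain ⟨e, he⟩ := exists_conj_pathSucc_eq hn p.2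
      exact ⟨e, Subtype.ext he⟩

lemma card_spines [Finite β] [Nonempty β] : Nat.card (spines β) = Nat.card (β ≃ β) := by
  obtain ⟨n, hn⟩ := Nat.exists_eq_succ_of_ne_zero (Nat.card_pos (α := β)).ne'
  rw [← Nat.card_congr (spinesEquiv hn),
    Nat.card_congr ((Finite.equivFinOfCardEq hn).symm.equivCongr (Equiv.refl β))]

lemma mapsTo_range_iterate (f : α → α) (b : α) :
    MapsTo f (range (f^[·] b)) (range (f^[·] b)) := by
  rintro _ ⟨j, rfl⟩
  exact ⟨j + 1, iterate_succ_apply' f j b⟩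

lemma IsRootedAt.isAbsorbing_of_range_iterate_eq {f : α → α} {r b : α} {S : Set α}
    (hf : IsRootedAt f r) (hS : range (f^[·] b) = S) : IsAbsorbing f S := by
  subst hS
  refine ⟨mapsTo_range_iterate f b, fun v => ?_⟩
  obtain ⟨k, hk⟩ := hf.2 v
  obtain ⟨m, hm⟩ := hf.2 b
  exact ⟨k, hk ▸ ⟨m, hm⟩⟩

lemma IsRootedAt.restrict_mem_spines {f : α → α} {r b : α} {S : Set α} (hf : IsRootedAt f r)
    (hS : range (f^[·] b) = S) (hm : MapsTo f S S) :
    (hm.restrict, ⟨b, hS ▸ ⟨0, rfl⟩⟩) ∈ spines S := by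
  subst hS
  obtain ⟨m, hmr⟩ := hf.2 b
  refine ⟨⟨⟨r, m, hmr⟩, Subtype.ext hf.1, fun x => ?_⟩,
    fun ⟨x, j, hj⟩ => ⟨j, ?_⟩⟩
  · obtain ⟨k, hk⟩ := hf.2 x
    exact ⟨k, Subtype.ext (by rw [hm.coe_iterate_restrict]; exact hk)⟩
  · exact Subtype.ext (by rw [hm.coe_iterate_restrict]; exact hj)

section Glue

variable {S : Set α} [DecidablePred (· ∈ S)] {c : S → S} {b : S}

lemma isRootedAt_glue (hc : (c, b) ∈ spines S) {g : α → α} (hg : g ∈ rootedForests S) :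
    ∃ r, IsRootedAt (glue c g) r := by
  obtain ⟨r, hr⟩ := hc.1
  refine ⟨r, by simp [glue, show c r = r from hr.1], fun v => ?_⟩
  obtain ⟨k, hk⟩ := (isAbsorbing_glue c hg).2 v
  obtain ⟨l, hl⟩ := hr.2 ⟨_, hk⟩
  refine ⟨l + k, ?_⟩
  rw [iterate_add_apply]
  exact (glue_iterate c g ⟨_, hk⟩ l).trans (congrArg Subtype.val hl)

lemma range_iterate_glue (hc : (c, b) ∈ spines S) (g : α → α) :
    range ((glue c g)^[·] b) = S := by
  refine Set.ext fun x => ⟨?_, fun hx => ?_⟩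
  · rintro ⟨j, rfl⟩
    change (glue c g)^[j] b ∈ S
    rw [glue_iterate]
    exact Subtype.coe_prop _
  · obtain ⟨j, hj⟩ := hc.2 ⟨x, hx⟩
    exact ⟨j, (glue_iterate c g b j).trans (congrArg Subtype.val hj)⟩

end Glue

noncomputable def spineFiberEquiv (S : Set α) [DecidablePred (· ∈ S)] :
    {p : {f : α → α // ∃ r, IsRootedAt f r} × α // range (p.1.1^[·] p.2) = S} ≃
      spines S × rootedForests S where
  toFun p :=
    have hf := p.1.1.2.choose_spec
    have hS := hf.isAbsorbing_of_range_iterate_eq p.2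
    (⟨_, hf.restrict_mem_spines p.2 hS.1⟩, ⟨forestPart S p.1.1.1, hS.forestPart_mem⟩)
  invFun q := ⟨(⟨glue q.1.1.1 q.2, isRootedAt_glue q.1.2 q.2.2⟩, q.1.1.2),
    range_iterate_glue q.1.2 _⟩
  left_inv p := Subtype.ext (Prod.ext (Subtype.ext
    (glue_restrict (p.1.1.2.choose_spec.isAbsorbing_of_range_iterate_eq p.2).1)) rfl)
  right_inv q := Prod.ext (Subtype.ext (Prod.ext (restrict_glue _ _) rfl))
    (Subtype.ext (forestPart_glue _ q.2.2.1))

theorem card_fun_eq_card_rooted_prod [Finite α] [Nonempty α] :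
    Nat.card (α → α) = Nat.card ({f : α → α // ∃ r, IsRootedAt f r} × α) := by
  classical
  have := Fintype.ofFinite α
  rw [← Nat.card_congr (Equiv.sigmaFiberEquiv (periodicPts : (α → α) → Set α)),
    ← Nat.card_congr (Equiv.sigmaFiberEquiv
      fun p : {f : α → α // ∃ r, IsRootedAt f r} × α => range (p.1.1^[·] p.2)),
    Nat.card_sigma, Nat.card_sigma]
  refine Finset.sum_congr rfl fun S _ => ?_
  rw [Nat.card_congr (periodicPtsFiberEquiv S), Nat.card_congr (spineFiberEquiv S),
    Nat.card_prod, Nat.card_prod]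
  rcases S.eq_empty_or_nonempty with rfl | hS
  · simp [rootedForests_empty]
  · have := hS.to_subtype
    rw [card_spines]

theorem card_isRootedAt [Finite α] (r : α) :
    Nat.card {f : α → α // IsRootedAt f r} = Nat.card α ^ (Nat.card α - 2) := by
  classical
  have : Nonempty α := ⟨r⟩
  have hcount := card_fun_eq_card_rooted_prod (α := α)
  rw [Nat.card_prod, Nat.card_congr (rerootEquiv r), Nat.card_prod, Nat.card_fun] at hcount
  set n := Nat.card α
  have hn : 0 < n := Nat.card_pos
  have hpow : n ^ (n - 2) * (n * n) = n ^ n := by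
    rcases Nat.lt_or_ge n 2 with h | h
    · rw [show n = 1 by omega]; rfl
    · rw [← sq, ← pow_add, Nat.sub_add_cancel h]
  refine Nat.eq_of_mul_eq_mul_right (Nat.mul_pos hn hn) ?_
  rw [hpow, hcount]
  ring

end Cayley

/-- Cayley's formula: the complete graph on `n ≥ 1` vertices has `n ^ (n - 2)`
spanning trees. -/
theorem cayley_formula (n : ℕ) (hn : 0 < n) :
    spanningTreeCount (⊤ : SimpleGraph (Fin n)) = n ^ (n - 2) := by
  rw [spanningTreeCount, ← Nat.card_coe_set_eq]
  simp only [le_top, true_and, Set.coe_ofPred]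
  rw [← Nat.card_congr (Cayley.rootedMapEquivTree (⟨0, hn⟩ : Fin n)), Cayley.card_isRootedAt,
    Nat.card_eq_fintype_card, Fintype.card_fin]
end

section
/- (Matrix Tree Theorem) For any simple graph G on n ≥ 2 vertices and any vertex v of G, the number of spanning trees τ(G) equals the determinant of the (n−1)×(n−1) matrix obtained from the Laplacian matrix of G by deleting the row and the column indexed by v. -/
open Finset

namespace Matrix

variable {m k R : Type*} [Fintype m] [DecidableEq m] [CommRing R]

theorem det_mul_eq_sum_prod_mul_det_submatrix [Fintype k] (A : Matrix m k R) (B : Matrix k m R) :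
    (A * B).det = ∑ r : m → k, (∏ i, A i (r i)) * (B.submatrix r id).det := by
  have hrows : A * B = fun i => ∑ j, A i j • B j := by
    ext i l
    simp [mul_apply, Finset.sum_apply]
  let D := (detRowAlternating : (m → R) [⋀^m]→ₗ[R] R).toMultilinearMap
  calc (A * B).det = D fun i => ∑ j, A i j • B j := by rw [hrows]; rfl
    _ = ∑ r : m → k, D fun i => A i (r i) • B (r i) := D.map_sum _
    _ = _ := by simp_rw [D.map_smul_univ]; rfl

theorem det_mul_eq_sum_injective [Fintype k] [DecidableEq k] (A : Matrix m k R)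
    (B : Matrix k m R) :
    (A * B).det
      = ∑ r : m → k with Function.Injective r, (∏ i, A i (r i)) * (B.submatrix r id).det := by
  rw [det_mul_eq_sum_prod_mul_det_submatrix, sum_filter_of_ne]
  intro r _ hr
  by_contra hinj
  obtain ⟨i, j, hij, hne⟩ : ∃ i j, r i = r j ∧ i ≠ j := by
    simpa [Function.Injective] using hinj
  exact hr (by rw [det_zero_of_row_eq hne (by ext; simp [hij]), mul_zero])

theorem sum_perm_prod_mul_det_submatrix (A : Matrix m k R) (B : Matrix k m R) (e : m → k) :
    ∑ σ : Equiv.Perm m, (∏ i, A i (e (σ i))) * (B.submatrix (e ∘ σ) id).det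
      = (A.submatrix id e).det * (B.submatrix e id).det := by
  have hperm (σ : Equiv.Perm m) : B.submatrix (e ∘ σ) id = (B.submatrix e id).submatrix σ id :=
    rfl
  simp_rw [hperm, det_permute, ← det_transpose (A.submatrix id e), det_apply', sum_mul]
  refine sum_congr rfl fun σ _ => ?_
  simp only [transpose_apply, submatrix_apply, id]
  ring

theorem sum_filter_injective_image_eq_sum_perm [Fintype k] [DecidableEq k] {M : Type*}
    [AddCommMonoid M] (S : Finset k) (e : m ≃ S) (F : (m → k) → M) :
    ∑ r : m → k with Function.Injective r ∧ univ.image r = S, F r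
      = ∑ σ : Equiv.Perm m, F fun i => e (σ i) := by
  symm
  refine sum_bij (fun σ _ i => (e (σ i) : k)) ?_ ?_ ?_ fun _ _ => rfl
  · intro σ _
    have hinj : Function.Injective fun i => (e (σ i) : k) :=
      Subtype.val_injective.comp (e.injective.comp σ.injective)
    refine mem_filter.mpr ⟨mem_univ _, hinj, eq_of_subset_of_card_le ?_ ?_⟩
    · simp [Finset.image_subset_iff]
    · rw [card_image_of_injective _ hinj, card_univ, Fintype.card_congr e, Fintype.card_coe]
  · intro σ _ τ _ h
    exact Equiv.ext fun i => e.injective (Subtype.ext (congrFun h i))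
  · intro r hr
    obtain ⟨hinj, himage⟩ := (mem_filter.mp hr).2
    have hmem (i : m) : r i ∈ S := himage ▸ mem_image_of_mem r (mem_univ i)
    refine ⟨Equiv.ofBijective (fun i => e.symm ⟨r i, hmem i⟩) ?_, mem_univ _, ?_⟩
    · exact Finite.injective_iff_bijective.mp fun i j h => hinj (by simpa using h)
    · funext i
      simp only [Equiv.ofBijective_apply, Equiv.apply_symm_apply]

/-- The Cauchy–Binet formula. -/
theorem det_mul_eq_sum_det_mul_det [Fintype k] [DecidableEq k] (A : Matrix m k R)
    (B : Matrix k m R) (e : ∀ S : Finset k, #S = Fintype.card m → m ≃ S) :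
    (A * B).det = ∑ S : Finset k, if h : #S = Fintype.card m then
      (A.submatrix id fun i => (e S h i : k)).det * (B.submatrix (fun i => (e S h i : k)) id).det
      else 0 := by
  rw [det_mul_eq_sum_injective, ← sum_fiberwise _ fun r => univ.image r]
  refine sum_congr rfl fun S _ => ?_
  rw [filter_filter]
  split_ifs with h
  · rw [sum_filter_injective_image_eq_sum_perm S (e S h), ← sum_perm_prod_mul_det_submatrix]
    rfl
  · refine sum_eq_zero fun r hr => absurd ?_ h
    obtain ⟨hinj, rfl⟩ := (mem_filter.mp hr).2
    simp [card_image_of_injective _ hinj]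

end Matrix

open Matrix

namespace SimpleGraph

variable {V : Type*}

theorem edgeSet_fromEdgeSet_of_subset (G : SimpleGraph V) {s : Set (Sym2 V)} (h : s ⊆ G.edgeSet) :
    (fromEdgeSet s).edgeSet = s := by
  rw [edgeSet_fromEdgeSet, sdiff_eq_left, Set.disjoint_left]
  exact fun e he => G.not_isDiag_of_mem_edgeSet (h he)

theorem spanningTreeCount_eq_ncard [Fintype V] (G : SimpleGraph V) :
    spanningTreeCount G = {S : Finset (Sym2 V) | #S + 1 = Fintype.card V ∧
      ↑S ⊆ G.edgeSet ∧ (fromEdgeSet (S : Set (Sym2 V))).Connected}.ncard := by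
  classical
  refine Set.ncard_congr (fun H _ => H.edgeFinset) ?_ ?_ ?_
  · rintro H ⟨hle, htree⟩
    exact ⟨htree.card_edgeFinset, by simpa using hle, by simpa using htree.connected⟩
  · intro H₁ H₂ _ _ h
    exact edgeFinset_inj.mp h
  · rintro S ⟨hcard, hsub, hconn⟩
    have hedges := G.edgeSet_fromEdgeSet_of_subset hsub
    refine ⟨fromEdgeSet S, ⟨by rwa [← edgeSet_subset_edgeSet, hedges], ?_⟩,
      by ext; simp [hedges]⟩
    rw [isTree_iff_connected_and_card, hedges, Nat.card_coe_set_eq, Set.ncard_coe_finset,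
      Nat.card_eq_fintype_card]
    exact ⟨hconn, hcard⟩

variable [LinearOrder V]

def orientedInc (u : V) (e : Sym2 V) : ℤ :=
  (if u = e.inf then 1 else 0) - (if u = e.sup then 1 else 0)

theorem orientedInc_mk_of_lt {a b : V} (h : a < b) (u : V) :
    orientedInc u s(a, b) = (if u = a then 1 else 0) - (if u = b then 1 else 0) := by
  simp [orientedInc, h.le]

theorem orientedInc_fst_mul_orientedInc {a b : V} (hab : a ≠ b) (u : V) :
    orientedInc a s(a, b) * orientedInc u s(a, b)
      = (if u = a then 1 else 0) - (if u = b then 1 else 0) := by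
  rcases hab.lt_or_gt with h | h
  · simp [orientedInc_mk_of_lt h, hab]
  · rw [Sym2.eq_swap]
    simp [orientedInc_mk_of_lt h, hab]

theorem sum_mul_orientedInc [Fintype V] (x : V → ℤ) (e : Sym2 V) :
    ∑ u, x u * orientedInc u e = x e.inf - x e.sup := by
  simp [orientedInc, mul_sub, sum_sub_distrib]

theorem reachable_fromEdgeSet_inf_sup {s : Set (Sym2 V)} {e : Sym2 V} (he : e ∈ s) :
    (fromEdgeSet s).Reachable e.inf e.sup := by
  induction e using Sym2.ind with | _ a b
  rcases eq_or_ne a b with rfl | hab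
  · simp
  · have hadj : (fromEdgeSet s).Adj a b := by simpa [hab] using he
    rcases le_total a b with h | h
    · simpa [h] using hadj.reachable
    · simpa [h] using hadj.reachable.symm

section Flow

variable {ι : Type*} (φ : ι → Sym2 V) {H : SimpleGraph V}

/-- `orientedInc d.fst d.edge = ±1` records whether the dart `d` follows the orientation of its
edge, so this is the net number of times `p` traverses `φ i`. -/
def walkFlow {a b : V} (p : H.Walk a b) (i : ι) : ℤ :=
  (p.darts.map fun d => if φ i = d.edge then orientedInc d.fst d.edge else 0).sum

theorem walkFlow_cons {a b c : V} (h : H.Adj a c) (q : H.Walk c b) (i : ι) :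
    walkFlow φ (.cons h q) i
      = (if φ i = s(a, c) then orientedInc a s(a, c) else 0) + walkFlow φ q i := rfl

variable {φ}

theorem sum_orientedInc_mul_walkFlow [Fintype ι] (hφ : Function.Injective φ)
    (hH : H.edgeSet ⊆ Set.range φ) {a b : V} (p : H.Walk a b) (u : V) :
    ∑ i, orientedInc u (φ i) * walkFlow φ p i
      = (if u = a then 1 else 0) - (if u = b then 1 else 0) := by
  induction p with
  | nil => simp [walkFlow]
  | @cons a c b hac q ih =>
    obtain ⟨i₀, hi₀⟩ : ∃ i, φ i = s(a, c) := hH (H.mem_edgeSet.mpr hac)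
    have hstep : ∑ i, orientedInc u (φ i) * (if φ i = s(a, c) then orientedInc a s(a, c) else 0)
        = orientedInc a s(a, c) * orientedInc u s(a, c) := by
      rw [Fintype.sum_eq_single i₀ fun i hi => by simp [← hi₀, hφ.ne hi]]
      simp [hi₀, mul_comm]
    simp only [walkFlow_cons, mul_add, sum_add_distrib, hstep, ih,
      orientedInc_fst_mul_orientedInc hac.ne]
    ring

end Flow

section ReducedIncidence

variable [Fintype V] {v : V} (φ : {u // u ≠ v} → Sym2 V)

theorem isUnit_det_orientedInc_of_connected (hφ : Function.Injective φ)
    (hconn : (fromEdgeSet (Set.range φ)).Connected) :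
    IsUnit (of fun (u : {u // u ≠ v}) i => orientedInc (u : V) (φ i)).det := by
  have hH : (fromEdgeSet (Set.range φ)).edgeSet ⊆ Set.range φ := by
    simp [edgeSet_fromEdgeSet]
  refine isUnit_det_of_right_inverse
    (B := of fun i (u : {u // u ≠ v}) => walkFlow φ (hconn.preconnected u v).some i) ?_
  ext u' u
  simp [mul_apply, sum_orientedInc_mul_walkFlow hφ hH, one_apply, u'.2, Subtype.ext_iff]

theorem det_orientedInc_eq_zero_of_not_connected
    (hconn : ¬(fromEdgeSet (Set.range φ)).Connected) :
    (of fun (u : {u // u ≠ v}) i => orientedInc (u : V) (φ i)).det = 0 := by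
  set H := fromEdgeSet (Set.range φ)
  obtain ⟨w, hw⟩ : ∃ w, ¬H.Reachable v w := by
    have : Nonempty V := ⟨v⟩
    by_contra! h
    exact hconn ⟨fun a b => (h a).symm.trans (h b)⟩
  let x : V → ℤ := fun u => if H.Reachable w u then 1 else 0
  have hxv : x v = 0 := if_neg fun h => hw h.symm
  rw [← exists_vecMul_eq_zero_iff]
  refine ⟨fun u => x u, fun h => ?_, ?_⟩
  · have hwv : w ≠ v := fun h => hw (h ▸ Reachable.refl w)
    simpa [x] using congrFun h ⟨w, hwv⟩
  · ext i
    have hsum : ∑ u : {u // u ≠ v}, x u * orientedInc (u : V) (φ i)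
        = ∑ u, x u * orientedInc u (φ i) := by
      rw [← sum_erase univ (a := v) (by rw [hxv, zero_mul])]
      exact (sum_subtype (univ.erase v) (p := (· ≠ v)) (by simp)
        fun u => x u * orientedInc u (φ i)).symm
    have hreach := reachable_fromEdgeSet_inf_sup (s := Set.range φ) ⟨i, rfl⟩
    simp only [vecMul, dotProduct, of_apply, Pi.zero_apply, hsum, sum_mul_orientedInc]
    rw [sub_eq_zero]
    exact if_congr ⟨fun h => h.trans hreach, fun h => h.trans hreach.symm⟩ rfl rfl

end ReducedIncidence

def orientedIncMatrix (G : SimpleGraph V) [DecidableRel G.Adj] : Matrix V (Sym2 V) ℤ :=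
  of fun u e => if e ∈ G.edgeSet then orientedInc u e else 0

variable (G : SimpleGraph V) [DecidableRel G.Adj]

theorem orientedIncMatrix_mul_orientedIncMatrix (u w : V) (e : Sym2 V) :
    G.orientedIncMatrix u e * G.orientedIncMatrix w e
      = if u = w then G.incMatrix ℤ u e * G.incMatrix ℤ w e
        else -(G.incMatrix ℤ u e * G.incMatrix ℤ w e) := by
  by_cases he : e ∈ G.edgeSet
  swap
  · simp [orientedIncMatrix, incMatrix, incidenceSet, he]
  induction e using Sym2.ind with | _ a b
  have hne : a ≠ b := G.ne_of_adj he
  wlog hab : a < b generalizing a b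
  · rw [Sym2.eq_swap]
    exact this b a (by rwa [Sym2.eq_swap]) hne.symm (hne.lt_or_gt.resolve_left hab)
  simp only [orientedIncMatrix, incMatrix, of_apply, he, if_true, orientedInc_mk_of_lt hab,
    mk'_mem_incidenceSet_iff, G.mem_edgeSet.mp he, true_and]
  split_ifs <;> simp_all

theorem lapMatrix_eq_orientedIncMatrix_mul_transpose [Fintype V] :
    G.lapMatrix ℤ = G.orientedIncMatrix * G.orientedIncMatrixᵀ := by
  -- `N * Nᵀ` agrees with `incMatrix * incMatrixᵀ = degMatrix + adjMatrix` on the diagonal and is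
  -- its negative off the diagonal.
  ext u w
  have h := congrFun₂ (G.incMatrix_mul_transpose (R := ℤ)) u w
  simp only [mul_apply, transpose_apply, orientedIncMatrix_mul_orientedIncMatrix] at h ⊢
  split_ifs at h ⊢ <;> simp_all [lapMatrix, degMatrix, adjMatrix_apply]

open Classical in
theorem det_submatrix_orientedIncMatrix_sq [Fintype V] {v : V} {S : Finset (Sym2 V)}
    (e : {u // u ≠ v} ≃ S) :
    (G.orientedIncMatrix.submatrix (↑) fun i => (e i : Sym2 V)).det ^ 2
      = if ↑S ⊆ G.edgeSet ∧ (fromEdgeSet (S : Set (Sym2 V))).Connected then 1 else 0 := by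
  set φ := fun i => (e i : Sym2 V)
  have hφ : Function.Injective φ := Subtype.val_injective.comp e.injective
  have hrange : Set.range φ = S := (e.surjective.range_comp _).trans Subtype.range_coe
  by_cases hE : ↑S ⊆ G.edgeSet
  · have hM : G.orientedIncMatrix.submatrix (↑) φ
        = of fun (u : {u // u ≠ v}) i => orientedInc (u : V) (φ i) := by
      ext u i
      simp [orientedIncMatrix, hE (e i).2, φ]
    rw [hM]
    split_ifs with hconn
    · exact Int.isUnit_sq (isUnit_det_orientedInc_of_connected φ hφ (hrange ▸ hconn.2))
    · rw [det_orientedInc_eq_zero_of_not_connected φ (hrange ▸ by tauto),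
        zero_pow two_ne_zero]
  · obtain ⟨f, hfS, hfE⟩ := Set.not_subset.mp hE
    rw [if_neg (by tauto), det_eq_zero_of_column_eq_zero (e.symm ⟨f, hfS⟩)
      (by simp [orientedIncMatrix, φ, hfE]), zero_pow two_ne_zero]

theorem det_submatrix_lapMatrix_eq_spanningTreeCount [Fintype V] (v : V) :
    ((G.lapMatrix ℤ).submatrix ((↑) : {u // u ≠ v} → V) (↑)).det = spanningTreeCount G := by
  classical
  let N := G.orientedIncMatrix.submatrix ((↑) : {u // u ≠ v} → V) id
  have hL : (G.lapMatrix ℤ).submatrix (↑) (↑) = N * Nᵀ := by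
    rw [lapMatrix_eq_orientedIncMatrix_mul_transpose,
      submatrix_mul _ _ _ id _ Function.bijective_id, transpose_submatrix]
  have hcard : Fintype.card {u // u ≠ v} + 1 = Fintype.card V := by
    rw [Fintype.card_subtype_compl, Fintype.card_subtype_eq]
    have := Fintype.card_pos_iff.mpr ⟨v⟩
    omega
  let e (S : Finset (Sym2 V)) (h : #S = Fintype.card {u // u ≠ v}) : {u // u ≠ v} ≃ S :=
    Fintype.equivOfCardEq (by simp [h])
  have hterm (S : Finset (Sym2 V)) :
      (if h : #S = Fintype.card {u // u ≠ v} then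
        (N.submatrix id fun i => (e S h i : Sym2 V)).det
          * (Nᵀ.submatrix (fun i => (e S h i : Sym2 V)) id).det else 0)
        = if #S + 1 = Fintype.card V ∧ ↑S ⊆ G.edgeSet ∧
            (fromEdgeSet (S : Set (Sym2 V))).Connected then 1 else 0 := by
    by_cases h : #S = Fintype.card {u // u ≠ v}
    · rw [dif_pos h, ← transpose_submatrix, det_transpose, ← sq, submatrix_submatrix,
        Function.comp_id, Function.id_comp, det_submatrix_orientedIncMatrix_sq]
      exact if_congr (by rw [← hcard, h]; simp) rfl rfl
    · rw [dif_neg h, if_neg (by omega)]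
  rw [hL, det_mul_eq_sum_det_mul_det N Nᵀ e, spanningTreeCount_eq_ncard,
    sum_congr rfl fun S _ => hterm S, sum_boole, ← Set.ncard_coe_finset, coe_filter]
  simp

end SimpleGraph

theorem matrix_tree_theorem_general (n : ℕ) (G : SimpleGraph (Fin n))
    [DecidableRel G.Adj] (v : Fin n) :
    (spanningTreeCount G : ℤ) =
      Matrix.det ((G.lapMatrix ℤ).submatrix
        (fun u : {u : Fin n // u ≠ v} => (u : Fin n))
        (fun u : {u : Fin n // u ≠ v} => (u : Fin n))) :=
  (G.det_submatrix_lapMatrix_eq_spanningTreeCount v).symm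

/-- The Matrix Tree Theorem: for a simple graph `G` on `n ≥ 2` vertices and any
vertex `v`, the number of spanning trees of `G` equals the determinant of the
matrix obtained from the Laplacian by deleting the row and column indexed by `v`. -/
theorem matrix_tree_theorem (n : ℕ) (hn : 2 ≤ n) (G : SimpleGraph (Fin n))
    [DecidableRel G.Adj] (v : Fin n) :
    (spanningTreeCount G : ℤ) =
      Matrix.det ((G.lapMatrix ℤ).submatrix
        (fun u : {u : Fin n // u ≠ v} => (u : Fin n))
        (fun u : {u : Fin n // u ≠ v} => (u : Fin n))) :=
  matrix_tree_theorem_general n G v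
end

section
/- A simple graph G on n ≥ 1 vertices is a threshold graph if and only if G admits a creation sequence presentation, i.e., there is an enumeration v_1, v_2, …, v_n of its vertices and labels c_2, …, c_n ∈ {0,1} such that for all 1 ≤ i < j ≤ n, v_i is adjacent to v_j if and only if c_j = 1. -/
open Classical in
lemma aux_threshold_creation : ∀ (n : ℕ) (V : Type*) [Fintype V] (G : SimpleGraph V),
    Fintype.card V = n → IsThreshold G →
    ∃ (e : Fin n ≃ V) (c : Fin n → Bool),
      ∀ i j : Fin n, i < j → (G.Adj (e i) (e j) ↔ c j = true) := by
  intro n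
  induction n with
  | zero =>
    intro V _ G hcard _
    have : IsEmpty V := Fintype.card_eq_zero_iff.mp hcard
    exact ⟨Equiv.equivOfIsEmpty (Fin 0) V, fun _ => false, fun i => i.elim0⟩
  | succ n ih =>
    intro V _ G hcard hT
    obtain ⟨φ, α, hφ⟩ := hT
    have hne : Nonempty V := Fintype.card_pos_iff.mp (by omega)
    obtain ⟨w, -, hw⟩ := Finset.exists_min_image Finset.univ φ ⟨hne.some, Finset.mem_univ _⟩
    obtain ⟨u, -, hu⟩ := Finset.exists_max_image Finset.univ φ ⟨hne.some, Finset.mem_univ _⟩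
    obtain ⟨v, b, hv⟩ : ∃ (v : V) (b : Bool), ∀ x, x ≠ v → (G.Adj v x ↔ b = true) := by
      by_cases hiso : ∀ x, ¬ G.Adj w x
      · exact ⟨w, false, fun x _ => by simp [hiso x]⟩
      · push_neg at hiso
        obtain ⟨x, hwx⟩ := hiso
        refine ⟨u, true, fun y hy => ?_⟩
        have h1 : α ≤ φ w + φ x := (hφ w x (G.ne_of_adj hwx)).mp hwx
        have h2 : φ w ≤ φ y := hw y (Finset.mem_univ _)
        have h3 : φ x ≤ φ u := hu x (Finset.mem_univ _)
        simp only [iff_true]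
        exact (hφ u y (Ne.symm hy)).mpr (by linarith)
    have hcard' : Fintype.card {y : V // y ≠ v} = n := by
      have h1 : Fintype.card {y : V // ¬ (y = v)} = Fintype.card V - Fintype.card {y : V // y = v} :=
        Fintype.card_subtype_compl _
      simp only [Fintype.card_subtype_eq] at h1
      simpa [hcard] using h1
    have hT' : IsThreshold (G.comap (Subtype.val : {y : V // y ≠ v} → V)) :=
      ⟨fun y => φ y.val, α, fun a b h => hφ a.val b.val (Subtype.val_injective.ne h)⟩
    obtain ⟨e', c', he'⟩ := ih {y : V // y ≠ v} (G.comap Subtype.val) hcard' hT'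
    refine ⟨finSuccEquivLast.trans (e'.optionCongr.trans (Equiv.optionSubtypeNe v)),
      Fin.snoc c' b, ?_⟩
    have heS : ∀ i : Fin n,
        (finSuccEquivLast.trans (e'.optionCongr.trans (Equiv.optionSubtypeNe v)))
          (Fin.castSucc i) = (e' i).val := by
      intro i; simp
    have heL : (finSuccEquivLast.trans (e'.optionCongr.trans (Equiv.optionSubtypeNe v)))
        (Fin.last n) = v := by simp
    intro i j hij
    induction j using Fin.lastCases with
    | last =>
      have hil : i < Fin.last n := hij
      have hi : i = Fin.castSucc (i.castPred (Fin.ne_last_of_lt hil)) := by simp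
      rw [heL, hi, heS, Fin.snoc_last]
      have hne' : ((e' (i.castPred (Fin.ne_last_of_lt hil))).val : V) ≠ v :=
        (e' _).2
      rw [G.adj_comm]
      exact hv _ hne'
    | cast j' =>
      have hil : i < Fin.last n := lt_of_lt_of_le hij (Fin.le_last _)
      have hi : i = Fin.castSucc (i.castPred (Fin.ne_last_of_lt hil)) := by simp
      rw [hi, heS, heS, Fin.snoc_castSucc]
      have hij' : i.castPred (Fin.ne_last_of_lt hil) < j' := by
        rw [← Fin.castSucc_lt_castSucc_iff, ← hi]; exact hij
      exact he' _ _ hij'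

/-- A finite simple graph on `n ≥ 1` vertices is a threshold graph if and only if it
admits a creation sequence presentation: an enumeration `v_1, …, v_n` of its vertices
(here `e 0, …, e (n-1)`) together with labels `c_j ∈ {0,1}` (here booleans; only the
labels of the vertices after the first one matter) such that for all `i < j`, `v_i` is
adjacent to `v_j` if and only if `c_j = 1`. -/
theorem threshold_iff_creation_sequence (V : Type*) [Fintype V] (G : SimpleGraph V)
    (hV : 1 ≤ Fintype.card V) :
    IsThreshold G ↔
      ∃ (e : Fin (Fintype.card V) ≃ V) (c : Fin (Fintype.card V) → Bool),
        ∀ i j : Fin (Fintype.card V), i < j → (G.Adj (e i) (e j) ↔ c j = true) := by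
  constructor
  · exact aux_threshold_creation (Fintype.card V) V G rfl
  · rintro ⟨e, c, hec⟩
    classical
    refine ⟨fun v => if c (e.symm v) then (3 : ℝ) ^ (e.symm v : ℕ) else -((3:ℝ) ^ (e.symm v : ℕ)),
      0, fun x y hxy => ?_⟩
    have key : ∀ i j : Fin (Fintype.card V), i < j →
        (G.Adj (e i) (e j) ↔ (0 : ℝ) ≤
          (if c i then (3 : ℝ) ^ (i : ℕ) else -((3:ℝ) ^ (i : ℕ))) +
          (if c j then (3 : ℝ) ^ (j : ℕ) else -((3:ℝ) ^ (j : ℕ)))) := by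
      intro i j hij
      have hpow : (3 : ℝ) ^ (i : ℕ) < (3:ℝ) ^ (j : ℕ) :=
        pow_lt_pow_right₀ (by norm_num) hij
      have hpos : (0:ℝ) < (3:ℝ) ^ (i : ℕ) := by positivity
      rw [hec i j hij]
      rcases hcj : c j with _ | _
      · simp only [Bool.false_eq_true, false_iff, if_neg (by simp [hcj] : ¬ c j = true),
          not_le]
        rcases hci : c i <;> simp <;> linarith
      · simp only [if_pos rfl, true_iff]
        rcases hci : c i <;> simp <;> linarith
    set i := e.symm x with hi
    set j := e.symm y with hj
    have hx : x = e i := by simp [hi]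
    have hy : y = e j := by simp [hj]
    have hijne : i ≠ j := fun h => hxy (by rw [hx, hy, h])
    rcases lt_or_gt_of_ne hijne with h | h
    · rw [hx, hy]
      simpa [Equiv.symm_apply_apply] using key i j h
    · rw [hx, hy, G.adj_comm]
      simpa [Equiv.symm_apply_apply, add_comm] using key j i h
end

section
/- Let G be a threshold graph on n vertices and let v_1, v_2, …, v_n be an enumeration of its vertices with deg(v_1) ≤ deg(v_2) ≤ ⋯ ≤ deg(v_n). Then there exists an integer m ≥ 0 such that N(v_i) = {v ∈ V : deg(v) ≥ n − i} for all i = 1, 2, …, m, and N[v_i] = {v ∈ V : deg(v) ≥ n − i + 1} for all i = m+2, m+3, …, n. -/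
section Aux

variable {V : Type*} [Fintype V] [DecidableEq V] {G : SimpleGraph V} [DecidableRel G.Adj]

/-- The key structural lemma about threshold graphs: if `deg u ≤ deg w` and `x ~ u`
with `x ≠ w`, then `x ~ w`. -/
lemma IsThreshold.adj_transfer (hG : IsThreshold G) {u w x : V}
    (hdeg : G.degree u ≤ G.degree w) (hxu : G.Adj x u) (hxw : x ≠ w) :
    G.Adj x w := by
  obtain ⟨φ, α, hφ⟩ := hG
  rcases eq_or_ne u w with rfl | huw
  · exact hxu
  rcases le_total (φ u) (φ w) with h | h
  · have h1 := (hφ x u hxu.ne).mp hxu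
    exact (hφ x w hxw).mpr (by linarith)
  · have hsub : G.neighborFinset w \ {u} ⊆ G.neighborFinset u \ {w} := by
      intro y hy
      simp only [Finset.mem_sdiff, SimpleGraph.mem_neighborFinset,
        Finset.mem_singleton] at hy ⊢
      obtain ⟨hwy, hyu⟩ := hy
      have h1 := (hφ w y hwy.ne).mp hwy
      exact ⟨(hφ u y (Ne.symm hyu)).mpr (by linarith), hwy.ne'⟩
    have hcard : (G.neighborFinset u \ {w}).card ≤ (G.neighborFinset w \ {u}).card := by
      by_cases hadj : G.Adj u w
      · rw [Finset.card_sdiff_of_subset (by simpa using hadj),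
          Finset.card_sdiff_of_subset (by simpa using hadj.symm)]
        simp only [Finset.card_singleton, SimpleGraph.card_neighborFinset_eq_degree]
        omega
      · rw [Finset.sdiff_eq_self_of_disjoint (by simpa using hadj),
          Finset.sdiff_eq_self_of_disjoint (by simpa using fun h => hadj h.symm)]
        simpa using hdeg
    have heq := Finset.eq_of_subset_of_card_le hsub hcard
    have hx : x ∈ G.neighborFinset u \ {w} := by
      simp only [Finset.mem_sdiff, SimpleGraph.mem_neighborFinset, Finset.mem_singleton]
      exact ⟨hxu.symm, hxw⟩
    rw [← heq] at hx
    simp only [Finset.mem_sdiff, SimpleGraph.mem_neighborFinset, Finset.mem_singleton] at hx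
    exact hx.1.symm

variable {n : ℕ} (e : Fin n ≃ V)

lemma card_tailF (t : ℕ) :
    (Finset.univ.filter fun k : Fin n => t ≤ k.val).card = n - t := by
  rw [← Nat.card_Ico t n]
  apply Finset.card_bij (fun k _ => k.val)
  · intro a ha
    simp only [Finset.mem_filter, Finset.mem_univ, true_and] at ha
    simp [Finset.mem_Ico, ha, a.isLt]
  · intro a _ b _ h
    exact Fin.ext h
  · intro b hb
    simp only [Finset.mem_Ico] at hb
    exact ⟨⟨b, hb.2⟩, by simp [hb.1], rfl⟩

lemma degree_eq_card_filter (j : Fin n) :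
    G.degree (e j) = (Finset.univ.filter fun k => G.Adj (e j) (e k)).card := by
  rw [← SimpleGraph.card_neighborFinset_eq_degree]
  exact (Finset.card_equiv e (by intro k; simp)).symm

variable (hG : IsThreshold G)
  (hmono : ∀ i j : Fin n, i ≤ j → G.degree (e i) ≤ G.degree (e j))

include hG hmono

/-- Upward closure of neighborhoods. -/
lemma up {i j k : Fin n} (h : G.Adj (e i) (e j)) (hjk : j.val ≤ k.val) (hki : k ≠ i) :
    G.Adj (e i) (e k) :=
  hG.adj_transfer (hmono j k (Fin.le_def.mpr hjk)) h
    (fun h' => hki (e.injective h').symm)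

lemma deg_lb1 {j k₁ : Fin n} (h1 : G.Adj (e j) (e k₁)) :
    n - k₁.val - 1 ≤ G.degree (e j) := by
  rw [degree_eq_card_filter e]
  calc n - k₁.val - 1
      = (Finset.univ.filter fun k : Fin n => k₁.val ≤ k.val).card - 1 := by
        rw [card_tailF]
    _ ≤ ((Finset.univ.filter fun k : Fin n => k₁.val ≤ k.val).erase j).card :=
        Finset.pred_card_le_card_erase
    _ ≤ _ := by
        apply Finset.card_le_card
        intro k hk
        simp only [Finset.mem_erase, Finset.mem_filter, Finset.mem_univ, true_and] at hk ⊢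
        exact up e hG hmono h1 hk.2 hk.1

lemma deg_lb1' {j k₁ : Fin n} (h1 : G.Adj (e j) (e k₁)) (hj : j.val < k₁.val) :
    n - k₁.val ≤ G.degree (e j) := by
  rw [degree_eq_card_filter e]
  rw [← card_tailF (n := n) k₁.val]
  apply Finset.card_le_card
  intro k hk
  simp only [Finset.mem_filter, Finset.mem_univ, true_and] at hk ⊢
  exact up e hG hmono h1 hk (fun h => by subst h; omega)

lemma deg_lb2 {j k₁ k₂ : Fin n} {t : ℕ} (h1 : G.Adj (e j) (e k₁))
    (h2 : G.Adj (e j) (e k₂)) (hk₁ : k₁.val ≤ t) (hk₂ : k₂.val < t) :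
    n - t ≤ G.degree (e j) := by
  rcases le_or_gt n t with h | h
  · omega
  rw [degree_eq_card_filter e]
  have hmem : k₂ ∉ (Finset.univ.filter fun k : Fin n => t ≤ k.val).erase j := by
    simp only [Finset.mem_erase, Finset.mem_filter, Finset.mem_univ, true_and]
    omega
  calc n - t
      = (n - t - 1) + 1 := by omega
    _ ≤ ((Finset.univ.filter fun k : Fin n => t ≤ k.val).erase j).card + 1 := by
        have := Finset.pred_card_le_card_erase
          (s := Finset.univ.filter fun k : Fin n => t ≤ k.val) (a := j)
        rw [card_tailF] at this
        omega
    _ = (insert k₂ ((Finset.univ.filter fun k : Fin n => t ≤ k.val).erase j)).card := by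
        rw [Finset.card_insert_of_notMem hmem]
    _ ≤ _ := by
        apply Finset.card_le_card
        intro k hk
        simp only [Finset.mem_insert, Finset.mem_erase, Finset.mem_filter,
          Finset.mem_univ, true_and] at hk ⊢
        rcases hk with rfl | ⟨hkj, hkt⟩
        · exact h2
        · exact up e hG hmono h1 (by omega) hkj

lemma deg_ub {j : Fin n} {t : ℕ} (h : ∀ k : Fin n, k.val ≤ t → ¬ G.Adj (e j) (e k)) :
    G.degree (e j) ≤ n - t - 1 := by
  rw [degree_eq_card_filter e]
  have : n - t - 1 = (Finset.univ.filter fun k : Fin n => t + 1 ≤ k.val).card := by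
    rw [card_tailF]; omega
  rw [this]
  apply Finset.card_le_card
  intro k hk
  simp only [Finset.mem_filter, Finset.mem_univ, true_and] at hk ⊢
  by_contra h'
  exact h k (by omega) hk

lemma deg_ub' {j : Fin n} {t : ℕ} (h : ∀ k : Fin n, k.val ≤ t → ¬ G.Adj (e j) (e k))
    (hj : t < j.val) : G.degree (e j) ≤ n - t - 2 := by
  rw [degree_eq_card_filter e]
  have hjm : j ∈ Finset.univ.filter fun k : Fin n => t + 1 ≤ k.val := by
    simp only [Finset.mem_filter, Finset.mem_univ, true_and]; omega
  have hcard : ((Finset.univ.filter fun k : Fin n => t + 1 ≤ k.val).erase j).card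
      = n - t - 2 := by
    rw [Finset.card_erase_of_mem hjm, card_tailF]; omega
  rw [← hcard]
  apply Finset.card_le_card
  intro k hk
  simp only [Finset.mem_filter, Finset.mem_univ, true_and] at hk
  simp only [Finset.mem_erase, Finset.mem_filter, Finset.mem_univ, true_and]
  refine ⟨fun h' => by subst h'; exact (G.irrefl hk), ?_⟩
  by_contra h'
  exact h k (by omega) hk

lemma aux_open (i : Fin n) (hi2 : i.val + 2 ≤ n)
    (Hi : ∀ j : Fin n, j.val ≤ i.val + 1 → ¬ G.Adj (e i) (e j)) :
    G.neighborSet (e i) = {v : V | n - (i.val + 1) ≤ G.degree v} := by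
  ext v
  obtain ⟨j, rfl⟩ : ∃ j, v = e j := ⟨e.symm v, (e.apply_symm_apply v).symm⟩
  simp only [SimpleGraph.mem_neighborSet, Set.mem_setOf_eq]
  constructor
  · intro hadj
    have hj : i.val + 2 ≤ j.val := by
      by_contra h
      exact Hi j (by omega) hadj
    have := deg_lb2 e hG hmono (h1 := hadj.symm) (h2 := hadj.symm)
      (t := i.val + 1) (by omega) (by omega)
    omega
  · intro hdeg
    by_contra hnadj
    rcases eq_or_ne j i with rfl | hne
    · have := deg_ub e hG hmono (t := j.val + 1) (fun k hk => Hi k hk)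
      omega
    · have hnone : ∀ k : Fin n, k.val ≤ i.val → ¬ G.Adj (e j) (e k) := by
        intro k hk hadj
        exact hnadj (hG.adj_transfer (hmono k i (Fin.le_def.mpr hk)) hadj
          (fun h => hne (e.injective h))).symm
      have hji : i.val < j.val := by
        by_contra h
        have h1 := hmono j i (Fin.le_def.mpr (by omega))
        have h2 := deg_ub e hG hmono (t := i.val + 1) (fun k hk => Hi k hk)
        omega
      have := deg_ub' e hG hmono hnone hji
      omega

lemma aux_closed (i k₀ : Fin n) (hk₀ : k₀.val < i.val) (hadj : G.Adj (e i) (e k₀)) :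
    insert (e i) (G.neighborSet (e i)) = {v : V | n - i.val ≤ G.degree v} := by
  ext v
  obtain ⟨j, rfl⟩ : ∃ j, v = e j := ⟨e.symm v, (e.apply_symm_apply v).symm⟩
  simp only [Set.mem_insert_iff, SimpleGraph.mem_neighborSet, Set.mem_setOf_eq]
  constructor
  · rintro (heq | hadj')
    · have : j = i := e.injective heq
      subst this
      have := deg_lb1 e hG hmono hadj
      omega
    · have hne : j ≠ i := fun h => by subst h; exact G.irrefl hadj'
      rcases lt_or_gt_of_ne (fun h : j.val = i.val => hne (Fin.ext h)) with hji | hji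
      · have := deg_lb1' e hG hmono (k₁ := i) hadj'.symm hji
        omega
      · have h2 : G.Adj (e j) (e k₀) := by
          have := hG.adj_transfer (hmono i j (Fin.le_def.mpr (by omega))) hadj.symm
            (fun h => by have := e.injective h; omega)
          exact this.symm
        have := deg_lb2 e hG hmono (h1 := hadj'.symm) (h2 := h2)
          (t := i.val) (le_refl _) hk₀
        omega
  · intro hdeg
    rcases eq_or_ne j i with rfl | hne
    · exact Or.inl rfl
    right
    by_contra hnadj
    have hnone : ∀ k : Fin n, k.val ≤ i.val → ¬ G.Adj (e j) (e k) := by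
      intro k hk hadj'
      exact hnadj (hG.adj_transfer (hmono k i (Fin.le_def.mpr hk)) hadj'
        (fun h => hne (e.injective h))).symm
    have := deg_ub e hG hmono hnone
    have : i.val < n := i.isLt
    omega

end Aux

/-- (Chvátal–Hammer) Let `G` be a threshold graph on `n` vertices, enumerated as
`v_1, …, v_n` (here `v_i = e ⟨i-1⟩`) with nondecreasing degrees.  Then there is an
integer `m ≥ 0` such that `N(v_i) = {v : deg v ≥ n - i}` for `i = 1, …, m` and
`N[v_i] = {v : deg v ≥ n - i + 1}` for `i = m+2, …, n`.
(With `i = i₀ + 1` for a zero-based index `i₀ : Fin n`, the bounds become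
`n - i = n - (i₀ + 1)` and `n - i + 1 = n - i₀`.) -/
theorem threshold_neighborhoods (n : ℕ) (V : Type*) [Fintype V] [DecidableEq V]
    (G : SimpleGraph V) [DecidableRel G.Adj] (hG : IsThreshold G)
    (e : Fin n ≃ V)
    (hmono : ∀ i j : Fin n, i ≤ j → G.degree (e i) ≤ G.degree (e j)) :
    ∃ m : ℕ,
      (∀ i : Fin n, i.val + 1 ≤ m →
        G.neighborSet (e i) = {v : V | n - (i.val + 1) ≤ G.degree v}) ∧
      (∀ i : Fin n, m + 2 ≤ i.val + 1 →
        insert (e i) (G.neighborSet (e i)) = {v : V | n - i.val ≤ G.degree v}) := by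
  classical
  rcases Nat.eq_zero_or_pos n with hn | hn
  · exact ⟨0, fun i _ => absurd i.isLt (by omega), fun i _ => absurd i.isLt (by omega)⟩
  set Lo : Fin n → Prop := fun i => ∃ j : Fin n, j.val < i.val ∧ G.Adj (e i) (e j)
    with hLo
  let S : Finset (Fin n) := Finset.univ.filter fun i => ¬ Lo i
  have hS : S.Nonempty := by
    refine ⟨⟨0, hn⟩, ?_⟩
    simp only [S, Finset.mem_filter, Finset.mem_univ, true_and, hLo]
    rintro ⟨j, hj, _⟩
    omega
  set K := S.max' hS with hK
  have hKnotLo : ¬ Lo K := (Finset.mem_filter.mp (S.max'_mem hS)).2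
  have hLoAbove : ∀ i : Fin n, K.val < i.val → Lo i := by
    intro i hi
    by_contra h
    have hmem : i ∈ S := Finset.mem_filter.mpr ⟨Finset.mem_univ _, h⟩
    have := S.le_max' i hmem
    rw [Fin.le_def] at this
    omega
  refine ⟨K.val, ?_, ?_⟩
  · intro i hi
    have hi2 : i.val + 2 ≤ n := by have := K.isLt; omega
    apply aux_open e hG hmono i hi2
    intro j hj hadj
    have hiK : i.val < K.val := by omega
    rcases eq_or_lt_of_le (show j.val ≤ K.val by omega) with hjK | hjK
    · have hjK' : j = K := Fin.ext hjK
      subst hjK'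
      exact hKnotLo ⟨i, hiK, hadj.symm⟩
    · have h2 : G.Adj (e j) (e K) :=
        hG.adj_transfer (hmono i K (Fin.le_def.mpr (by omega))) hadj.symm
          (fun h => by have := e.injective h; omega)
      exact hKnotLo ⟨j, hjK, h2.symm⟩
  · intro i hi
    obtain ⟨k₀, hk₀, hadj⟩ := hLoAbove i (by omega)
    exact aux_closed e hG hmono i k₀ hk₀ hadj
end

section
/- (Ross) A bipartite simple graph H = (X,Y,E), with every edge joining X to Y, is a difference graph if and only if H admits a bipartite creation sequence presentation, i.e., there is an enumeration v_1, v_2, …, v_n of all its vertices and labels c_1, …, c_n ∈ {0,1} such that X = {v_i : c_i = 1}, Y = {v_i : c_i = 0}, and for all 1 ≤ i < j ≤ n, v_i is adjacent to v_j if and only if c_i = 0 and c_j = 1. -/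
/-!
Put `f x = φ x` on `X` and `f y = α - φ y` on `Y`; then `x ∼ y` iff `f y ≤ f x`. Listing the
vertices by increasing `f`, with `Y` before `X` among equal values, gives a creation sequence.
Conversely, in a creation sequence `x ∈ X` and `y ∈ Y` are adjacent iff `y` comes before `x`,
so `φ = ±(position)` with threshold `1` works.
-/

theorem Fintype.exists_equiv_fin_monotone {V β : Type*} [Fintype V] [LinearOrder β]
    (f : V → β) : ∃ e : Fin (Fintype.card V) ≃ V, Monotone (f ∘ e) := by
  let e₀ := (Fintype.equivFin V).symm
  exact ⟨(Tuple.sort (f ∘ e₀)).trans e₀, Tuple.monotone_sort (f ∘ e₀)⟩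

namespace SimpleGraph

variable {V : Type*} (H : SimpleGraph V)

def IsCreationSequence {n : ℕ} (e : Fin n ≃ V) (c : Fin n → Bool) : Prop :=
  ∀ i j, i < j → (H.Adj (e i) (e j) ↔ c i = false ∧ c j = true)

variable {H}

theorem exists_isCreationSequence_of_key [Fintype V] {β : Type*} [LinearOrder β]
    (c : V → Bool) (f : V → β) (hsame : ∀ u w, H.Adj u w → c u ≠ c w)
    (hkey : ∀ u w, c u = false → c w = true → (H.Adj u w ↔ f u ≤ f w)) :
    ∃ e : Fin (Fintype.card V) ≃ V, H.IsCreationSequence e (c ∘ e) := by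
  obtain ⟨e, he⟩ := Fintype.exists_equiv_fin_monotone fun v => toLex (f v, c v)
  refine ⟨e, fun i j hij => ?_⟩
  have hle : f (e i) < f (e j) ∨ f (e i) = f (e j) ∧ c (e i) ≤ c (e j) :=
    Prod.Lex.le_iff.mp (he hij.le)
  simp only [Function.comp_apply]
  cases hi : c (e i) <;> cases hj : c (e j)
  · simpa using fun h => hsame _ _ h (hi.trans hj.symm)
  · simpa [hkey _ _ hi hj] using hle.elim le_of_lt (le_of_eq ·.1)
  · -- equal keys are impossible here, since `Y` is listed first among them
    have hlt : f (e i) < f (e j) :=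
      hle.resolve_right fun h => absurd (hi ▸ hj ▸ h.2) (by decide)
    rw [H.adj_comm, hkey _ _ hj hi]
    simpa using hlt
  · simpa using fun h => hsame _ _ h (hi.trans hj.symm)

namespace IsCreationSequence

variable {n : ℕ} {e : Fin n ≃ V} {c : Fin n → Bool}

theorem adj_iff_lt (hs : H.IsCreationSequence e c) {x y : V}
    (hx : c (e.symm x) = true) (hy : c (e.symm y) = false) :
    H.Adj x y ↔ e.symm y < e.symm x := by
  rcases lt_trichotomy (e.symm y) (e.symm x) with h | h | h
  · simpa [H.adj_comm, hx, hy, h] using hs _ _ h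
  · simp [h, hx] at hy
  · simpa [hx, h.not_gt] using hs _ _ h

theorem exists_threshold (hs : H.IsCreationSequence e c) :
    ∃ (φ : V → ℝ) (α : ℝ), ∀ x, c (e.symm x) = true → ∀ y, c (e.symm y) = false →
      (H.Adj x y ↔ α ≤ φ x + φ y) := by
  refine ⟨fun v => if c (e.symm v) then (e.symm v : ℝ) else -(e.symm v : ℝ), 1,
    fun x hx y hy => ?_⟩
  simp only [hx, hy, if_true, Bool.false_eq_true, if_false]
  rw [hs.adj_iff_lt hx hy, Fin.lt_def, ← Nat.add_one_le_iff, ← Nat.cast_le (α := ℝ)]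
  push_cast
  constructor <;> intro h <;> linarith

end IsCreationSequence

end SimpleGraph

open SimpleGraph in
/-- (Ross) A bipartite simple graph `H` with parts `X`, `Y` (disjoint, covering all
vertices, every edge joining `X` to `Y`) is a difference graph — i.e. admits weights
`φ` and a threshold `α` with `x ∼ y ↔ φ x + φ y ≥ α` for `x ∈ X`, `y ∈ Y` — if and
only if it admits a bipartite creation sequence presentation: an enumeration
`e 0, …, e (n-1)` of all vertices with labels `c i ∈ {0,1}` such that
`X = {v : c v = 1}`, `Y = {v : c v = 0}`, and for `i < j`, `e i ∼ e j` iff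
`c i = 0` and `c j = 1`. -/
theorem difference_iff_bipartite_creation_sequence (V : Type*) [Fintype V]
    (H : SimpleGraph V) (X Y : Set V) (hdisj : Disjoint X Y)
    (hcover : X ∪ Y = Set.univ)
    (hbip : ∀ u v : V, H.Adj u v → (u ∈ X ∧ v ∈ Y) ∨ (u ∈ Y ∧ v ∈ X)) :
    (∃ (φ : V → ℝ) (α : ℝ), ∀ x ∈ X, ∀ y ∈ Y, (H.Adj x y ↔ α ≤ φ x + φ y)) ↔
      ∃ (e : Fin (Fintype.card V) ≃ V) (c : Fin (Fintype.card V) → Bool),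
        X = {v : V | c (e.symm v) = true} ∧
        Y = {v : V | c (e.symm v) = false} ∧
        ∀ i j : Fin (Fintype.card V), i < j →
          (H.Adj (e i) (e j) ↔ (c i = false ∧ c j = true)) := by
  classical
  have hY : Y = Xᶜ := (IsCompl.compl_eq ⟨hdisj, codisjoint_iff.mpr hcover⟩).symm
  subst hY
  constructor
  · rintro ⟨φ, α, hφ⟩
    let f : V → ℝ := fun v => if v ∈ X then φ v else α - φ v
    have hsame : ∀ u w, H.Adj u w → decide (u ∈ X) ≠ decide (w ∈ X) := fun u w h => by
      rcases hbip u w h with ⟨hu, hw⟩ | ⟨hu, hw⟩ <;> simp_all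
    have hkey : ∀ u w, u ∉ X → w ∈ X → (H.Adj u w ↔ f u ≤ f w) := fun u w hu hw => by
      rw [H.adj_comm, hφ w hw u hu]
      simp only [f, if_neg hu, if_pos hw]
      constructor <;> intro h <;> linarith
    obtain ⟨e, he⟩ := exists_isCreationSequence_of_key _ f hsame
      (by simpa only [decide_eq_false_iff_not, decide_eq_true_eq] using hkey)
    exact ⟨e, _, by ext; simp, by ext; simp, he⟩
  · rintro ⟨e, c, hX, -, hs⟩
    subst hX
    simpa using IsCreationSequence.exists_threshold hs
end

section
/- (Mahadev–Peled) Let H = (X,Y,E) be a difference graph, let x_1, …, x_{|X|} be an enumeration of X with deg(x_1) ≤ ⋯ ≤ deg(x_{|X|}), and let y_1, …, y_{|Y|} be an enumeration of Y with deg(y_1) ≤ ⋯ ≤ deg(y_{|Y|}). Then N(x_i) = {y ∈ Y : deg(y) ≥ |X| − i + 1} for all i = 1, …, |X|, and N(y_i) = {x ∈ X : deg(x) ≥ |Y| − i + 1} for all i = 1, …, |Y|. -/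
/-- `H` is a difference graph with (bipartition) parts `X` and `Y`: the parts are
disjoint, cover all vertices, every edge joins `X` to `Y`, and there are weights `φ`
and a threshold `α` with `x ∼ y` iff `φ x + φ y ≥ α`, for `x ∈ X`, `y ∈ Y`. -/
def IsDifferenceGraph {V : Type*} (H : SimpleGraph V) (X Y : Set V) : Prop :=
  Disjoint X Y ∧ X ∪ Y = Set.univ ∧
    (∀ u v : V, H.Adj u v → (u ∈ X ∧ v ∈ Y) ∨ (u ∈ Y ∧ v ∈ X)) ∧
    ∃ (φ : V → ℝ) (α : ℝ), ∀ x ∈ X, ∀ y ∈ Y, (H.Adj x y ↔ α ≤ φ x + φ y)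

lemma mahadev_peled_half {V : Type*} [Fintype V] [DecidableEq V]
    (H : SimpleGraph V) [DecidableRel H.Adj] (X Y : Finset V)
    (hdisj : Disjoint (X : Set V) (Y : Set V))
    (hbip : ∀ u v : V, H.Adj u v → (u ∈ X ∧ v ∈ Y) ∨ (u ∈ Y ∧ v ∈ X))
    (φ : V → ℝ) (α : ℝ)
    (hφ : ∀ x ∈ X, ∀ y ∈ Y, (H.Adj x y ↔ α ≤ φ x + φ y))
    (ex : Fin X.card ≃ {v : V // v ∈ X})
    (hx : ∀ i j : Fin X.card, i ≤ j → H.degree (ex i : V) ≤ H.degree (ex j : V)) :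
    ∀ i : Fin X.card,
      H.neighborSet (ex i : V) = {v : V | v ∈ Y ∧ X.card - i.val ≤ H.degree v} := by
  have hdisj' : ∀ v : V, v ∈ X → v ∉ Y := by
    intro v hvX hvY
    exact Set.disjoint_left.mp hdisj (Finset.mem_coe.mpr hvX) (Finset.mem_coe.mpr hvY)
  -- neighbors of X-vertices lie in Y
  have hNY : ∀ x ∈ X, ∀ v, H.Adj x v → v ∈ Y := by
    intro x hxX v hadj
    rcases hbip x v hadj with ⟨_, h⟩ | ⟨h, _⟩
    · exact h
    · exact absurd h (hdisj' x hxX)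
  -- monotone step along φ
  have step : ∀ a ∈ X, ∀ b ∈ X, φ a ≤ φ b →
      H.neighborFinset a ⊆ H.neighborFinset b := by
    intro a ha b hb hab y hy
    rw [SimpleGraph.mem_neighborFinset] at hy ⊢
    have hyY : y ∈ Y := hNY a ha y hy
    have := (hφ a ha y hyY).mp hy
    exact (hφ b hb y hyY).mpr (by linarith)
  -- degree-monotone implies neighborhood-monotone
  have hmono : ∀ a ∈ X, ∀ b ∈ X, H.degree a ≤ H.degree b →
      H.neighborFinset a ⊆ H.neighborFinset b := by
    intro a ha b hb hdeg
    rcases le_total (φ a) (φ b) with h | h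
    · exact step a ha b hb h
    · have hsub := step b hb a ha h
      have hle : (H.neighborFinset a).card ≤ (H.neighborFinset b).card := by
        rwa [H.card_neighborFinset_eq_degree, H.card_neighborFinset_eq_degree]
      have := Finset.eq_of_subset_of_card_le hsub hle
      rw [this]
  intro i
  ext v
  simp only [SimpleGraph.mem_neighborSet, Set.mem_setOf_eq]
  let S : Finset (Fin X.card) := Finset.univ.filter (fun j => H.Adj (ex j : V) v)
  have hmemS : ∀ j : Fin X.card, j ∈ S ↔ H.Adj (ex j : V) v := by
    intro j; simp [S]
  have hup : ∀ j k : Fin X.card, j ∈ S → j ≤ k → k ∈ S := by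
    intro j k hj hjk
    rw [hmemS] at hj ⊢
    have hsub := hmono (ex j) (ex j).2 (ex k) (ex k).2 (hx j k hjk)
    have hv : v ∈ H.neighborFinset (ex j : V) :=
      (SimpleGraph.mem_neighborFinset _ _ _).mpr hj
    exact (SimpleGraph.mem_neighborFinset _ _ _).mp (hsub hv)
  have hcard : v ∈ Y → S.card = H.degree v := by
    intro hvY
    rw [← H.card_neighborFinset_eq_degree]
    apply Finset.card_bij (fun j _ => (ex j : V))
    · intro j hj
      rw [hmemS] at hj
      exact (SimpleGraph.mem_neighborFinset _ _ _).mpr hj.symm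
    · intro a _ b _ h
      exact ex.injective (Subtype.ext h)
    · intro u hu
      have hadj : H.Adj v u := (SimpleGraph.mem_neighborFinset _ _ _).mp hu
      have huX : u ∈ X := by
        rcases hbip v u hadj with ⟨hvX, _⟩ | ⟨_, h⟩
        · exact absurd hvY (hdisj' v hvX)
        · exact h
      refine ⟨ex.symm ⟨u, huX⟩, ?_, ?_⟩
      · rw [hmemS, Equiv.apply_symm_apply]
        exact hadj.symm
      · rw [Equiv.apply_symm_apply]
  constructor
  · intro hadj
    have hvY : v ∈ Y := hNY (ex i) (ex i).2 v hadj
    refine ⟨hvY, ?_⟩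
    have hiS : i ∈ S := (hmemS i).mpr hadj
    have hsub : Finset.Ici i ⊆ S := fun k hk => hup i k hiS (Finset.mem_Ici.mp hk)
    have h1 := Finset.card_le_card hsub
    rw [Fin.card_Ici] at h1
    rw [← hcard hvY]
    exact h1
  · rintro ⟨hvY, hdeg⟩
    have hc := hcard hvY
    have hin : i.val < X.card := i.isLt
    have hpos : 0 < S.card := by omega
    have hne : S.Nonempty := Finset.card_pos.mp hpos
    have hm : S.min' hne ∈ S := S.min'_mem hne
    have hsub2 : S ⊆ Finset.Ici (S.min' hne) :=
      fun k hk => Finset.mem_Ici.mpr (S.min'_le k hk)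
    have h2 := Finset.card_le_card hsub2
    rw [Fin.card_Ici] at h2
    have hmlt : (S.min' hne).val < X.card := (S.min' hne).isLt
    have hle : S.min' hne ≤ i := by
      rw [Fin.le_def]; omega
    exact (hmemS i).mp (hup _ i hm hle)

/-- (Mahadev–Peled) Let `H = (X, Y, E)` be a difference graph, with the vertices of
`X` enumerated as `x_1, …, x_{|X|}` (here `x_i = ex ⟨i-1⟩`) in nondecreasing order
of degree, and similarly for `Y`.  Then `N(x_i) = {y ∈ Y : deg y ≥ |X| - i + 1}` for
all `i = 1, …, |X|`, and `N(y_i) = {x ∈ X : deg x ≥ |Y| - i + 1}` for all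
`i = 1, …, |Y|`.  (With `i = i₀ + 1` for a zero-based index `i₀`, the bound
`|X| - i + 1` becomes `|X| - i₀`.) -/
theorem mahadev_peled_neighborhoods (V : Type*) [Fintype V] [DecidableEq V]
    (H : SimpleGraph V) [DecidableRel H.Adj] (X Y : Finset V)
    (hdiff : IsDifferenceGraph H ↑X ↑Y)
    (ex : Fin X.card ≃ {v : V // v ∈ X}) (ey : Fin Y.card ≃ {v : V // v ∈ Y})
    (hx : ∀ i j : Fin X.card, i ≤ j → H.degree (ex i : V) ≤ H.degree (ex j : V))
    (hy : ∀ i j : Fin Y.card, i ≤ j → H.degree (ey i : V) ≤ H.degree (ey j : V)) :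
    (∀ i : Fin X.card,
      H.neighborSet (ex i : V) = {v : V | v ∈ Y ∧ X.card - i.val ≤ H.degree v}) ∧
    (∀ i : Fin Y.card,
      H.neighborSet (ey i : V) = {v : V | v ∈ X ∧ Y.card - i.val ≤ H.degree v}) := by
  obtain ⟨hdisj, _, hbip, φ, α, hφ⟩ := hdiff
  have hbip' : ∀ u v : V, H.Adj u v → (u ∈ X ∧ v ∈ Y) ∨ (u ∈ Y ∧ v ∈ X) := by
    intro u v h
    simpa using hbip u v h
  have hφ' : ∀ x ∈ X, ∀ y ∈ Y, (H.Adj x y ↔ α ≤ φ x + φ y) := by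
    intro x hx' y hy'
    exact hφ x (Finset.mem_coe.mpr hx') y (Finset.mem_coe.mpr hy')
  constructor
  · exact mahadev_peled_half H X Y hdisj hbip' φ α hφ' ex hx
  · refine mahadev_peled_half H Y X hdisj.symm
      (fun u v h => ((hbip' u v h).symm)) φ α ?_ ey hy
    intro y hy' x hx'
    rw [H.adj_comm, add_comm]
    exact hφ' x hx' y hy'
end
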